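/- arXiv:1103.4721 — 9 statements merged into one kernel-verified Lean document; each statement's English description precedes it below -/
import Mathlib

section
/- Let L be a finite-dimensional Leibniz algebra over ℂ and D a derivation of L. Write D = D₀ + N for the Jordan–Chevalley decomposition of the linear operator D, where D₀ is diagonalizable, N is nilpotent, and D₀N = ND₀. Then the diagonalizable part D₀ is itself a derivation of L. -/
/-!
Since `N` is nilpotent and commutes with `D₀`, every eigenvector of `D₀` for `μ` is a generalized
eigenvector of `D = D₀ + N` for `μ`. As `D₀` is diagonalizable and the generalized eigenspaces of
`D` are independent, the eigenspaces of `D₀` are exactly the generalized eigenspaces of `D`. The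
Leibniz rule for `D` shows that the bracket maps the generalized eigenspaces for `μ` and `ν` into
the one for `μ + ν`, so on eigenvectors of `D₀` the bracket is additive in eigenvalues, which is
the derivation identity for `D₀`; bilinearity extends it to all of `L`.
-/

/-- A linear endomorphism is diagonalizable if its eigenspaces span the whole space,
i.e. the space admits a basis of eigenvectors. -/
def IsDiagonalizable {L : Type*} [AddCommGroup L] [Module ℂ L]
    (f : Module.End ℂ L) : Prop :=
  (⨆ μ : ℂ, f.eigenspace μ) = ⊤

namespace Module.End

variable {R M : Type*} [CommRing R] [AddCommGroup M] [Module R M]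

theorem eigenspace_le_maxGenEigenspace_add_of_isNilpotent {f n : End R M} (hfn : Commute f n)
    (hn : IsNilpotent n) (μ : R) : f.eigenspace μ ≤ (f + n).maxGenEigenspace μ := by
  obtain ⟨k, hk⟩ := hn
  have hn_top : n.genEigenspace 0 k = ⊤ := by
    simp [genEigenspace_nat, hk]
  intro x hx
  have := genEigenspace_inf_le_add f n μ 0 1 k hfn ⟨hx, hn_top ▸ Submodule.mem_top⟩
  rw [add_zero] at this
  exact (f + n).genEigenspace μ |>.monotone le_top this

end Module.End

section Derivation

variable {R M₁ M₂ M₃ : Type*} [CommRing R] [AddCommGroup M₁] [Module R M₁] [AddCommGroup M₂]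
  [Module R M₂] [AddCommGroup M₃] [Module R M₃] (b : M₁ →ₗ[R] M₂ →ₗ[R] M₃)
  {D₁ : Module.End R M₁} {D₂ : Module.End R M₂} {D₃ : Module.End R M₃}

open Module.End in
theorem LinearMap.apply_apply_mem_maxGenEigenspace_add
    (hD : ∀ x y, D₃ (b x y) = b (D₁ x) y + b x (D₂ y)) {μ ν : R} {x : M₁} {y : M₂}
    (hx : x ∈ D₁.maxGenEigenspace μ) (hy : y ∈ D₂.maxGenEigenspace ν) :
    b x y ∈ D₃.maxGenEigenspace (μ + ν) := by
  set A := D₁ - μ • 1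
  set B := D₂ - ν • 1
  set F := D₃ - (μ + ν) • 1
  have hF : ∀ x y, F (b x y) = b (A x) y + b x (B y) := fun x y ↦ by
    simp only [F, A, B, LinearMap.sub_apply, LinearMap.smul_apply, Module.End.one_apply, hD,
      map_sub, map_smul, add_smul, LinearMap.add_apply]
    abel
  -- Leibniz rule for `F = A ⊗ 1 + 1 ⊗ B`: each application of `F` moves one factor of `A` or `B`
  -- onto an argument, so `p + q` applications kill `b x y`.
  have key : ∀ n p q (x : M₁) (y : M₂), p + q = n → (A ^ p) x = 0 → (B ^ q) y = 0 →
      (F ^ n) (b x y) = 0 := by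
    intro n
    induction n with
    | zero =>
      rintro p q x y hpq hx -
      obtain rfl : p = 0 := by omega
      simp_all
    | succ n ih =>
      rintro (_ | p) (_ | q) x y hpq hx hy
      · simp_all
      · simp_all
      · simp_all
      rw [pow_succ, Module.End.mul_apply, hF, map_add,
        ih p (q + 1) (A x) y (by omega) (by rwa [← Module.End.mul_apply, ← pow_succ]) hy,
        ih (p + 1) q x (B y) (by omega) hx (by rwa [← Module.End.mul_apply, ← pow_succ]),
        add_zero]
  rw [mem_maxGenEigenspace] at hx hy ⊢
  obtain ⟨p, hp⟩ := hx
  obtain ⟨q, hq⟩ := hy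
  exact ⟨p + q, key _ p q x y rfl hp hq⟩

end Derivation

theorem LinearMap.ext_of_iSup_eq_top₂ {R M N P ι κ : Type*} [CommRing R] [AddCommGroup M]
    [Module R M] [AddCommGroup N] [Module R N] [AddCommGroup P] [Module R P]
    {p : ι → Submodule R M} {q : κ → Submodule R N} (hp : ⨆ i, p i = ⊤) (hq : ⨆ j, q j = ⊤)
    {f g : M →ₗ[R] N →ₗ[R] P} (h : ∀ i j, ∀ x ∈ p i, ∀ y ∈ q j, f x y = g x y) : f = g := by
  refine LinearMap.ext_on (s := ⋃ i, (p i : Set M)) ?_ ?_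
  · rw [← Submodule.iSup_eq_span, hp]
  rintro x ⟨-, ⟨i, rfl⟩, hx⟩
  refine LinearMap.ext_on (s := ⋃ j, (q j : Set N)) ?_ ?_
  · rw [← Submodule.iSup_eq_span, hq]
  rintro y ⟨-, ⟨j, rfl⟩, hy⟩
  exact h i j x hx y hy

open Module.End in
theorem leibniz_jordan_chevalley_diag_part_is_derivation_general
    {L : Type*} [AddCommGroup L] [Module ℂ L]
    (b : L →ₗ[ℂ] L →ₗ[ℂ] L)
    (D : Module.End ℂ L)
    (hD : ∀ x y : L, D (b x y) = b (D x) y + b x (D y))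
    (D₀ N : Module.End ℂ L)
    (hdiag : IsDiagonalizable D₀)
    (hnil : IsNilpotent N)
    (hcomm : Commute D₀ N)
    (hsum : D = D₀ + N) :
    ∀ x y : L, D₀ (b x y) = b (D₀ x) y + b x (D₀ y) := by
  have heq : D₀.eigenspace = D.maxGenEigenspace :=
    (D.independent_maxGenEigenspace.le_iff_eq_of_iSup_eq_top hdiag).mp
      (hsum ▸ eigenspace_le_maxGenEigenspace_add_of_isNilpotent hcomm hnil)
  suffices b.compr₂ D₀ = b ∘ₗ D₀ + b.compl₂ D₀ from
    fun x y ↦ by simpa using LinearMap.congr_fun₂ this x y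
  refine LinearMap.ext_of_iSup_eq_top₂ hdiag hdiag fun μ ν x hx y hy ↦ ?_
  have hxy : b x y ∈ D₀.eigenspace (μ + ν) :=
    heq ▸ b.apply_apply_mem_maxGenEigenspace_add hD (heq ▸ hx) (heq ▸ hy)
  rw [mem_eigenspace_iff] at hx hy hxy
  simp [hx, hy, hxy, add_smul]

/-- Let `L` be a finite-dimensional Leibniz algebra over ℂ and `D` a derivation.
If `D = D₀ + N` is the Jordan–Chevalley decomposition of `D` (`D₀` diagonalizable, `N`
nilpotent, `D₀N = ND₀`), then `D₀` is itself a derivation of `L`. -/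
theorem leibniz_jordan_chevalley_diag_part_is_derivation
    {L : Type*} [AddCommGroup L] [Module ℂ L] [FiniteDimensional ℂ L]
    (b : L →ₗ[ℂ] L →ₗ[ℂ] L)
    (leib : ∀ x y z : L, b (b x y) z = b (b x z) y + b x (b y z))
    (D : Module.End ℂ L)
    (hD : ∀ x y : L, D (b x y) = b (D x) y + b x (D y))
    (D₀ N : Module.End ℂ L)
    (hdiag : IsDiagonalizable D₀)
    (hnil : IsNilpotent N)
    (hcomm : Commute D₀ N)
    (hsum : D = D₀ + N) :
    ∀ x y : L, D₀ (b x y) = b (D₀ x) y + b x (D₀ y) :=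
  leibniz_jordan_chevalley_diag_part_is_derivation_general b D hD D₀ N hdiag hnil hcomm hsum
end

section
/- Let L be a Leibniz algebra over ℂ, A an automorphism of L, and set P = A − I. Then for all x, y ∈ L and every k ∈ ℕ with k ≥ 1, P^k([x,y]) = Σ_{i=0}^{k} Σ_{j=0}^{i} C(k,i) · C(i,j) · [P^{k−j}(x), P^{k−i+j}(y)]. -/
/-!
Through the linearization `L ⊗ L → L` of the bracket, `A - 1` corresponds to
`A ⊗ A - 1 = (1 ⊗ P + P ⊗ 1) + P ⊗ P` with `P = A - 1`. The three summands commute, so the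
binomial theorem, applied twice, expands its `k`-th power.
-/

open TensorProduct LinearMap Finset

section

variable {R M N : Type*} [CommRing R] [AddCommGroup M] [AddCommGroup N] [Module R M]
  [Module R N]

theorem TensorProduct.map_sub_one (f : Module.End R M) (g : Module.End R N) :
    map f g - 1 = (lTensor M (g - 1) + rTensor N (f - 1)) + map (f - 1) (g - 1) := by
  conv_lhs => rw [← sub_add_cancel f 1, ← sub_add_cancel g 1]
  simp only [map_add_left, map_add_right, Module.End.one_eq_id, map_id, lTensor, rTensor]
  abel

theorem Commute.tensorProduct_map {f f' : Module.End R M} {g g' : Module.End R N}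
    (hf : Commute f f') (hg : Commute g g') : Commute (map f g) (map f' g') := by
  rw [Commute, SemiconjBy, ← TensorProduct.map_mul, ← TensorProduct.map_mul, hf.eq, hg.eq]

theorem LinearMap.lTensor_add_rTensor_pow (f : Module.End R M) (g : Module.End R N) (n : ℕ) :
    (lTensor M g + rTensor N f) ^ n =
      ∑ j ∈ Finset.range (n + 1), (n.choose j : R) • map (f ^ (n - j)) (g ^ j) := by
  have hcomm : Commute (lTensor M g) (rTensor N f) :=
    (Commute.one_left f).tensorProduct_map (Commute.one_right g)
  rw [hcomm.add_pow]
  refine sum_congr rfl fun j _ => ?_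
  rw [lTensor_pow, rTensor_pow, ← Nat.cast_comm, ← nsmul_eq_mul, ← Nat.cast_smul_eq_nsmul R,
    Module.End.mul_eq_comp, lTensor_comp_rTensor]

theorem TensorProduct.map_sub_one_pow (f : Module.End R M) (g : Module.End R N) (k : ℕ) :
    (map f g - 1) ^ k =
      ∑ i ∈ Finset.range (k + 1), ∑ j ∈ Finset.range (i + 1),
        ((k.choose i : R) * (i.choose j : R)) •
          map ((f - 1) ^ (k - j)) ((g - 1) ^ (k - i + j)) := by
  have hcomm : Commute (lTensor M (g - 1) + rTensor N (f - 1)) (map (f - 1) (g - 1)) :=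
    ((Commute.one_left _).tensorProduct_map (Commute.refl _)).add_left
      ((Commute.refl _).tensorProduct_map (Commute.one_left _))
  rw [map_sub_one, hcomm.add_pow]
  refine sum_congr rfl fun i hi => ?_
  have hik : i ≤ k := Nat.lt_succ_iff.mp (mem_range.mp hi)
  rw [lTensor_add_rTensor_pow, TensorProduct.map_pow, ← Nat.cast_comm, ← nsmul_eq_mul,
    ← Nat.cast_smul_eq_nsmul R, sum_mul, smul_sum]
  refine sum_congr rfl fun j hj => ?_
  have hji : j ≤ i := Nat.lt_succ_iff.mp (mem_range.mp hj)
  rw [smul_mul_assoc, ← TensorProduct.map_mul, ← pow_add, ← pow_add, smul_smul]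
  congr 3 <;> omega

end

theorem LinearMap.sub_one_pow_apply_apply {R M N Q : Type*} [CommRing R] [AddCommGroup M]
    [AddCommGroup N] [AddCommGroup Q] [Module R M] [Module R N] [Module R Q]
    (b : M →ₗ[R] N →ₗ[R] Q) (f : Module.End R M) (g : Module.End R N) (h : Module.End R Q)
    (hb : ∀ x y, h (b x y) = b (f x) (g y)) (k : ℕ) (x : M) (y : N) :
    ((h - 1) ^ k) (b x y) =
      ∑ i ∈ Finset.range (k + 1), ∑ j ∈ Finset.range (i + 1),
        ((k.choose i : R) * (i.choose j : R)) •
          b (((f - 1) ^ (k - j)) x) (((g - 1) ^ (k - i + j)) y) := by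
  have hlift : h ∘ₗ lift b = lift b ∘ₗ map f g := TensorProduct.ext' fun x y => by simp [hb]
  have hlift_sub : (h - 1) ∘ₗ lift b = lift b ∘ₗ (map f g - 1) := by
    rw [sub_comp, comp_sub, hlift]; rfl
  have hpow := congr($(Module.End.commute_pow_left_of_commute hlift_sub k) (x ⊗ₜ y))
  simpa [map_sub_one_pow, sum_apply] using hpow

theorem leibniz_automorphism_P_power_formula_general
    {L : Type*} [AddCommGroup L] [Module ℂ L]
    (b : L →ₗ[ℂ] L →ₗ[ℂ] L)
    (A : Module.End ℂ L)
    (hA : ∀ x y : L, A (b x y) = b (A x) (A y))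
    (x y : L) (k : ℕ) :
    ((A - 1) ^ k) (b x y) =
      ∑ i ∈ Finset.range (k + 1), ∑ j ∈ Finset.range (i + 1),
        ((k.choose i : ℂ) * (i.choose j : ℂ)) •
          b (((A - 1) ^ (k - j)) x) (((A - 1) ^ (k - i + j)) y) :=
  b.sub_one_pow_apply_apply A A A hA k x y

/-- Let `L` be a Leibniz algebra over ℂ, `A` an automorphism of `L`, and
`P = A - I`. Then for all `x y : L` and every `k ≥ 1`,
`P^k [x,y] = ∑_{i=0}^k ∑_{j=0}^i C(k,i) C(i,j) • [P^{k-j} x, P^{k-i+j} y]`. -/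
theorem leibniz_automorphism_P_power_formula
    {L : Type*} [AddCommGroup L] [Module ℂ L]
    (b : L →ₗ[ℂ] L →ₗ[ℂ] L)
    (leib : ∀ x y z : L, b (b x y) z = b (b x z) y + b x (b y z))
    (A : Module.End ℂ L)
    (hbij : Function.Bijective A)
    (hA : ∀ x y : L, A (b x y) = b (A x) (A y))
    (x y : L) (k : ℕ) (hk : 1 ≤ k) :
    ((A - 1) ^ k) (b x y) =
      ∑ i ∈ Finset.range (k + 1), ∑ j ∈ Finset.range (i + 1),
        ((k.choose i : ℂ) * (i.choose j : ℂ)) •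
          b (((A - 1) ^ (k - j)) x) (((A - 1) ^ (k - i + j)) y) :=
  leibniz_automorphism_P_power_formula_general b A hA x y k
end

section
/- Let L be a Leibniz algebra over ℂ and A an automorphism of L. Then for all α, β ∈ ℂ, all x, y ∈ L and every k ∈ ℕ, (A − αβ·I)^k([x,y]) = Σ_{j=0}^{k} Σ_{i=0}^{j} α^i · β^{j−i} · C(k,j) · C(j,i) · [(A − α·I)^{k−i}(x), (A − β·I)^{k−j+i}(y)]. -/
open Finset in
private noncomputable def cf5 (α β : ℂ) (k j i : ℕ) : ℂ :=
  α ^ i * β ^ (j - i) * (k.choose j : ℂ) * (j.choose i : ℂ)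

private lemma cf5_zero_right (α β : ℂ) (k j i : ℕ) (h : j < i) : cf5 α β k j i = 0 := by
  simp [cf5, Nat.choose_eq_zero_of_lt h]

private lemma cf5_zero_left (α β : ℂ) (k j i : ℕ) (h : k < j) : cf5 α β k j i = 0 := by
  simp [cf5, Nat.choose_eq_zero_of_lt h]

private lemma cf5_succ_succ (α β : ℂ) (k j i : ℕ) :
    cf5 α β (k+1) (j+1) (i+1) =
      cf5 α β k (j+1) (i+1) + β * cf5 α β k j (i+1) + α * cf5 α β k j i := by
  rcases le_or_gt (i+1) j with h | h
  · unfold cf5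
    rw [Nat.choose_succ_succ (n := k) (k := j), Nat.choose_succ_succ (n := j) (k := i)]
    have h1 : j + 1 - (i + 1) = j - i := by omega
    have h2 : j - (i+1) + 1 = j - i := by omega
    rw [h1, ← h2, pow_succ]
    push_cast
    ring
  · rcases Nat.lt_or_ge j i with h' | h'
    · rw [cf5_zero_right _ _ _ _ _ (by omega), cf5_zero_right _ _ _ _ _ (by omega),
        cf5_zero_right _ _ _ _ _ (by omega), cf5_zero_right _ _ _ _ _ (by omega)]
      ring
    · have : i = j := by omega
      subst this
      rw [cf5_zero_right _ _ _ i (i+1) (by omega)]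
      unfold cf5
      rw [Nat.choose_succ_succ (n := k) (k := i)]
      simp only [Nat.sub_self, Nat.succ_sub_succ, pow_zero, Nat.choose_self, Nat.cast_one,
        Nat.cast_add]
      rw [pow_succ]
      ring

private lemma cf5_succ_zero (α β : ℂ) (k j : ℕ) :
    cf5 α β (k+1) (j+1) 0 = cf5 α β k (j+1) 0 + β * cf5 α β k j 0 := by
  unfold cf5
  rw [Nat.choose_succ_succ (n := k) (k := j)]
  simp only [Nat.sub_zero, Nat.choose_zero_right, Nat.cast_one, Nat.cast_add, pow_zero]
  rw [pow_succ]
  ring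

private lemma cf5_zero (α β : ℂ) (k i : ℕ) : cf5 α β (k+1) 0 i = cf5 α β k 0 i := by
  simp [cf5]

open Finset in
private lemma comb5 {M : Type*} [AddCommGroup M] [Module ℂ M] (α β : ℂ) (k : ℕ) (W : ℕ → ℕ → M) :
    ∑ j ∈ range (k+2), ∑ i ∈ range (k+2), cf5 α β (k+1) j i • W j i
    = (∑ j ∈ range (k+1), ∑ i ∈ range (k+1), cf5 α β k j i • W j i)
    + (∑ j ∈ range (k+1), ∑ i ∈ range (k+1), (β * cf5 α β k j i) • W (j+1) i)
    + (∑ j ∈ range (k+1), ∑ i ∈ range (k+1), (α * cf5 α β k j i) • W (j+1) (i+1)) := by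
  have hL : ∑ j ∈ range (k+2), ∑ i ∈ range (k+2), cf5 α β (k+1) j i • W j i
      = (∑ j ∈ range (k+1),
          ((∑ i ∈ range (k+1), (cf5 α β k (j+1) (i+1) • W (j+1) (i+1)
              + (β * cf5 α β k j (i+1)) • W (j+1) (i+1)
              + (α * cf5 α β k j i) • W (j+1) (i+1)))
            + (cf5 α β k (j+1) 0 • W (j+1) 0 + (β * cf5 α β k j 0) • W (j+1) 0)))
        + ∑ i ∈ range (k+2), cf5 α β k 0 i • W 0 i := by
    rw [Finset.sum_range_succ' (fun j => ∑ i ∈ range (k+2), cf5 α β (k+1) j i • W j i) (k+1)]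
    congr 1
    · apply Finset.sum_congr rfl
      intro j _
      rw [Finset.sum_range_succ' (fun i => cf5 α β (k+1) (j+1) i • W (j+1) i) (k+1)]
      congr 1
      · apply Finset.sum_congr rfl
        intro i _
        rw [cf5_succ_succ, add_smul, add_smul]
      · rw [cf5_succ_zero, add_smul]
    · exact Finset.sum_congr rfl fun i _ => by rw [cf5_zero]
  rw [hL]
  have hA1 : ∑ j ∈ range (k+1), ∑ i ∈ range (k+1), cf5 α β k j i • W j i
      = (∑ j ∈ range (k+1),
          ((∑ i ∈ range (k+1), cf5 α β k (j+1) (i+1) • W (j+1) (i+1))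
            + cf5 α β k (j+1) 0 • W (j+1) 0))
        + ∑ i ∈ range (k+2), cf5 α β k 0 i • W 0 i := by
    have e1 : ∑ j ∈ range (k+1), ∑ i ∈ range (k+1), cf5 α β k j i • W j i
        = ∑ j ∈ range (k+2), ∑ i ∈ range (k+2), cf5 α β k j i • W j i := by
      rw [Finset.sum_range_succ (fun j => ∑ i ∈ range (k+2), cf5 α β k j i • W j i) (k+1)]
      have : ∑ i ∈ range (k+2), cf5 α β k (k+1) i • W (k+1) i = 0 := by
        apply Finset.sum_eq_zero
        intro i _
        rw [cf5_zero_left _ _ _ _ _ (by omega), zero_smul]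
      rw [this, add_zero]
      apply Finset.sum_congr rfl
      intro j hj
      rw [Finset.sum_range_succ (fun i => cf5 α β k j i • W j i) (k+1)]
      rw [cf5_zero_right _ _ _ _ _ (by simp at hj; omega), zero_smul, add_zero]
    rw [e1, Finset.sum_range_succ' (fun j => ∑ i ∈ range (k+2), cf5 α β k j i • W j i) (k+1)]
    congr 1
    apply Finset.sum_congr rfl
    intro j _
    rw [Finset.sum_range_succ' (fun i => cf5 α β k (j+1) i • W (j+1) i) (k+1)]
  have hA2 : ∑ j ∈ range (k+1), ∑ i ∈ range (k+1), (β * cf5 α β k j i) • W (j+1) i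
      = ∑ j ∈ range (k+1),
          ((∑ i ∈ range (k+1), (β * cf5 α β k j (i+1)) • W (j+1) (i+1))
            + (β * cf5 α β k j 0) • W (j+1) 0) := by
    apply Finset.sum_congr rfl
    intro j hj
    have e2 : ∑ i ∈ range (k+1), (β * cf5 α β k j i) • W (j+1) i
        = ∑ i ∈ range (k+2), (β * cf5 α β k j i) • W (j+1) i := by
      rw [Finset.sum_range_succ (fun i => (β * cf5 α β k j i) • W (j+1) i) (k+1)]
      rw [cf5_zero_right _ _ _ _ _ (by simp at hj; omega), mul_zero, zero_smul, add_zero]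
    rw [e2, Finset.sum_range_succ' (fun i => (β * cf5 α β k j i) • W (j+1) i) (k+1)]
  rw [hA1, hA2]
  simp only [Finset.sum_add_distrib]
  abel

private lemma keyS5 {L : Type*} [AddCommGroup L] [Module ℂ L] (b : L →ₗ[ℂ] L →ₗ[ℂ] L)
    (A : Module.End ℂ L)
    (hA : ∀ u v : L, A (b u v) = b (A u) (A v)) (α β : ℂ) (u v : L) :
    (A - (α*β) • (1 : Module.End ℂ L)) (b u v) =
      b ((A - α • (1 : Module.End ℂ L)) u) ((A - β • (1 : Module.End ℂ L)) v)
      + β • b ((A - α • (1 : Module.End ℂ L)) u) v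
      + α • b u ((A - β • (1 : Module.End ℂ L)) v) := by
  have h1 : A u = (A - α • (1 : Module.End ℂ L)) u + α • u := by
    simp [LinearMap.sub_apply]
  have h2 : A v = (A - β • (1 : Module.End ℂ L)) v + β • v := by
    simp [LinearMap.sub_apply]
  have hh := hA u v
  rw [h1, h2] at hh
  simp only [map_add, map_smul, LinearMap.add_apply, LinearMap.smul_apply] at hh
  simp only [LinearMap.sub_apply, LinearMap.smul_apply, Module.End.one_apply]
  rw [hh]
  set X := (A - α • (1 : Module.End ℂ L)) u
  set Y := (A - β • (1 : Module.End ℂ L)) v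
  show (b X Y + α • b u Y + β • (b X v + α • b u v)) - (α * β) • b u v
    = b X Y + β • b X v + α • b u Y
  module

open Finset in
private lemma sq5 {L : Type*} [AddCommGroup L] [Module ℂ L] (b : L →ₗ[ℂ] L →ₗ[ℂ] L)
    (A : Module.End ℂ L)
    (hA : ∀ u v : L, A (b u v) = b (A u) (A v)) (α β : ℂ) (x y : L) (k : ℕ) :
    ((A - (α * β) • (1 : Module.End ℂ L)) ^ k) (b x y) =
      ∑ j ∈ range (k+1), ∑ i ∈ range (k+1),
        cf5 α β k j i • b (((A - α • (1 : Module.End ℂ L)) ^ (k - i)) x)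
          (((A - β • (1 : Module.End ℂ L)) ^ (k - j + i)) y) := by
  set P := A - α • (1 : Module.End ℂ L) with hP
  set Q := A - β • (1 : Module.End ℂ L) with hQ
  set S := A - (α * β) • (1 : Module.End ℂ L) with hSdef
  have pw : ∀ (f : Module.End ℂ L) (n : ℕ) (v : L), f ((f^n) v) = (f^(n+1)) v := by
    intro f n v; rw [pow_succ']; rfl
  have tm : ∀ (c d : ℂ) (w : L), c • (d • w) = (d * c) • w := by
    intro c d w; rw [smul_smul, mul_comm]
  induction k with
  | zero => simp [cf5]
  | succ k ih =>
    have hS : (S ^ (k+1)) (b x y) = S ((S ^ k) (b x y)) := by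
      rw [pow_succ']; rfl
    set W : ℕ → ℕ → L := fun j i => b ((P ^ (k+1-i)) x) ((Q ^ (k+1-j+i)) y) with hW
    have mid : (S ^ (k+1)) (b x y)
        = ∑ j ∈ range (k+1), ∑ i ∈ range (k+1),
            (cf5 α β k j i • W j i + (β * cf5 α β k j i) • W (j+1) i
              + (α * cf5 α β k j i) • W (j+1) (i+1)) := by
      rw [hS, ih, map_sum]
      apply Finset.sum_congr rfl
      intro j hj
      rw [map_sum]
      apply Finset.sum_congr rfl
      intro i hi
      rw [map_smul, keyS5 b A hA α β]
      have hj' : j ≤ k := by simpa using Nat.lt_succ_iff.mp (mem_range.mp hj)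
      have hi' : i ≤ k := by simpa using Nat.lt_succ_iff.mp (mem_range.mp hi)
      have E1 : b (P ((P^(k-i)) x)) (Q ((Q^(k-j+i)) y)) = W j i := by
        rw [pw, pw, show k-i+1 = k+1-i by omega, show k-j+i+1 = k+1-j+i by omega]
      have E2 : b (P ((P^(k-i)) x)) ((Q^(k-j+i)) y) = W (j+1) i := by
        rw [pw, show k-i+1 = k+1-i by omega, hW]
        have : k - j + i = k+1-(j+1)+i := by omega
        rw [this]
      have E3 : b ((P^(k-i)) x) (Q ((Q^(k-j+i)) y)) = W (j+1) (i+1) := by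
        rw [pw, show k-j+i+1 = k+1-(j+1)+(i+1) by omega, hW]
        have : k - i = k+1-(i+1) := by omega
        rw [this]
      rw [E1, E2, E3, smul_add, smul_add, tm, tm]
    rw [mid]
    simp only [Finset.sum_add_distrib]
    rw [← comb5 α β k W]

/-- Let `L` be a Leibniz algebra over ℂ and `A` an automorphism of `L`.
Then for all `α β : ℂ`, all `x y : L` and every `k : ℕ`,
`(A - αβ·I)^k [x,y] = ∑_{j=0}^k ∑_{i=0}^j α^i β^{j-i} C(k,j) C(j,i) •
  [(A - α·I)^{k-i} x, (A - β·I)^{k-j+i} y]`. -/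
theorem leibniz_automorphism_binomial_formula
    {L : Type*} [AddCommGroup L] [Module ℂ L]
    (b : L →ₗ[ℂ] L →ₗ[ℂ] L)
    (leib : ∀ x y z : L, b (b x y) z = b (b x z) y + b x (b y z))
    (A : Module.End ℂ L)
    (hbij : Function.Bijective A)
    (hA : ∀ x y : L, A (b x y) = b (A x) (A y))
    (α β : ℂ) (x y : L) (k : ℕ) :
    ((A - (α * β) • (1 : Module.End ℂ L)) ^ k) (b x y) =
      ∑ j ∈ Finset.range (k + 1), ∑ i ∈ Finset.range (j + 1),
        (α ^ i * β ^ (j - i) * (k.choose j : ℂ) * (j.choose i : ℂ)) •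
          b (((A - α • (1 : Module.End ℂ L)) ^ (k - i)) x)
            (((A - β • (1 : Module.End ℂ L)) ^ (k - j + i)) y) := by
  rw [sq5 b A hA α β x y k]
  apply Finset.sum_congr rfl
  intro j hj
  have hj' : j ≤ k := Nat.lt_succ_iff.mp (Finset.mem_range.mp hj)
  rw [← Finset.sum_subset (Finset.range_subset_range.mpr (by omega : j + 1 ≤ k + 1))]
  · exact Finset.sum_congr rfl fun i _ => by rw [cf5]
  · intro i _ hni
    rw [cf5_zero_right _ _ _ _ _ (by simp at hni; omega), zero_smul]
end

section
/- Let L be a finite-dimensional Leibniz algebra over ℂ and A an automorphism of L. Then for all α, β ∈ ℂ, [L_α, L_β] ⊆ L_{αβ}, where L_λ denotes the characteristic space of A for λ; in particular, if αβ is not an eigenvalue of A then [L_α, L_β] = 0. -/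
theorem aux_leibniz_auto {L : Type*} [AddCommGroup L] [Module ℂ L]
    (b : L →ₗ[ℂ] L →ₗ[ℂ] L) (A : Module.End ℂ L)
    (hA : ∀ x y : L, A (b x y) = b (A x) (A y)) (α β : ℂ) :
    ∀ n p q : ℕ, p + q ≤ n → ∀ x y : L,
      ((A - α • (1 : Module.End ℂ L)) ^ p) x = 0 →
      ((A - β • (1 : Module.End ℂ L)) ^ q) y = 0 →
      ((A - (α * β) • (1 : Module.End ℂ L)) ^ n) (b x y) = 0 := by
  intro n
  induction n with
  | zero =>
    intro p q hpq x y hx hy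
    have hp0 : p = 0 := by omega
    subst hp0
    simp only [pow_zero, Module.End.one_apply] at hx
    simp [hx]
  | succ n ih =>
    intro p q hpq x y hx hy
    match p, q with
    | 0, q =>
      simp only [pow_zero, Module.End.one_apply] at hx
      simp [hx]
    | p, 0 =>
      simp only [pow_zero, Module.End.one_apply] at hy
      simp [hy]
    | p + 1, q + 1 =>
      have key : (A - (α * β) • (1 : Module.End ℂ L)) (b x y)
          = b ((A - α • (1 : Module.End ℂ L)) x) (A y)
            + α • b x ((A - β • (1 : Module.End ℂ L)) y) := by
        simp only [LinearMap.sub_apply, LinearMap.smul_apply, Module.End.one_apply,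
          map_sub, map_smul, LinearMap.sub_apply, hA]
        module
      have h1 : ((A - α • (1 : Module.End ℂ L)) ^ p) ((A - α • (1 : Module.End ℂ L)) x) = 0 := by
        rw [← Module.End.mul_apply, ← pow_succ]; exact hx
      have h2 : ((A - β • (1 : Module.End ℂ L)) ^ (q + 1)) (A y) = 0 := by
        have hc : (A - β • (1 : Module.End ℂ L)) ^ (q + 1) * A
            = A * (A - β • (1 : Module.End ℂ L)) ^ (q + 1) := by
          apply Commute.pow_left
          simp [Commute, SemiconjBy, mul_sub, sub_mul]
        calc ((A - β • (1 : Module.End ℂ L)) ^ (q + 1)) (A y)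
            = ((A - β • (1 : Module.End ℂ L)) ^ (q + 1) * A) y := rfl
          _ = A (((A - β • (1 : Module.End ℂ L)) ^ (q + 1)) y) := by rw [hc]; rfl
          _ = 0 := by rw [hy, map_zero]
      have h3 : ((A - β • (1 : Module.End ℂ L)) ^ q) ((A - β • (1 : Module.End ℂ L)) y) = 0 := by
        rw [← Module.End.mul_apply, ← pow_succ]; exact hy
      have e1 : p + (q + 1) ≤ n := by omega
      have e2 : (p + 1) + q ≤ n := by omega
      rw [pow_succ, Module.End.mul_apply, key, map_add, map_smul,
        ih p (q + 1) e1 _ _ h1 h2, ih (p + 1) q e2 _ _ hx h3, smul_zero, add_zero]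

/-- For a finite-dimensional Leibniz algebra `L` over ℂ with bracket `b`
and an automorphism `A`, if `x` lies in the characteristic space of `A` for `α` and `y`
in that for `β`, then `[x,y]` lies in the characteristic space for `αβ`; in particular,
if `αβ` is not an eigenvalue of `A`, then `[x,y] = 0`. -/
theorem leibniz_automorphism_charSpace_bracket
    {L : Type*} [AddCommGroup L] [Module ℂ L] [FiniteDimensional ℂ L]
    (b : L →ₗ[ℂ] L →ₗ[ℂ] L)
    (leib : ∀ x y z : L, b (b x y) z = b (b x z) y + b x (b y z))
    (A : Module.End ℂ L)
    (hbij : Function.Bijective A)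
    (hA : ∀ x y : L, A (b x y) = b (A x) (A y))
    (α β : ℂ) (x y : L)
    (hx : ∃ p : ℕ, ((A - α • (1 : Module.End ℂ L)) ^ p) x = 0)
    (hy : ∃ q : ℕ, ((A - β • (1 : Module.End ℂ L)) ^ q) y = 0) :
    (∃ k : ℕ, ((A - (α * β) • (1 : Module.End ℂ L)) ^ k) (b x y) = 0) ∧
      (¬ Module.End.HasEigenvalue A (α * β) → b x y = 0) := by
  obtain ⟨p, hx⟩ := hx
  obtain ⟨q, hy⟩ := hy
  have hk : ((A - (α * β) • (1 : Module.End ℂ L)) ^ (p + q)) (b x y) = 0 :=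
    aux_leibniz_auto b A hA α β (p + q) p q le_rfl x y hx hy
  refine ⟨⟨p + q, hk⟩, fun hne => ?_⟩
  have hinj : Function.Injective (A - (α * β) • (1 : Module.End ℂ L)) := by
    rw [← LinearMap.ker_eq_bot]
    by_contra hk0
    obtain ⟨z, hz, hz0⟩ := Submodule.exists_mem_ne_zero_of_ne_bot hk0
    refine hne (Module.End.hasEigenvalue_of_hasEigenvector (x := z) ⟨?_, hz0⟩)
    rw [Module.End.mem_eigenspace_iff]
    have := (LinearMap.mem_ker.mp hz)
    simp only [LinearMap.sub_apply, LinearMap.smul_apply, Module.End.one_apply, sub_eq_zero] at this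
    exact this
  have : Function.Injective ((A - (α * β) • (1 : Module.End ℂ L)) ^ (p + q)) := by
    induction p + q with
    | zero => simp [pow_zero]; exact fun a b h => h
    | succ n ihn =>
      rw [pow_succ]
      exact fun a c h => hinj (ihn (by simpa [Module.End.mul_apply] using h))
  exact this (by simpa using hk)
end

section
/- Let n, m be non-negative integers with n < m. Then Σ_{i=0}^{n} ((−1)^i / (m−i)) · C(n,i) · C(m−i,n) equals 1/m if n = 0, and equals 0 if n ≥ 1. -/
/-!
For `n = k + 1`, absorption `C(p + 1, k + 1) / (p + 1) = C(p, k) / (k + 1)` with `p + 1 = m - i`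
turns the sum into `1 / (k + 1)` times `∑ (-1)^i C(k + 1, i) C(m - 1 - i, k)`. Reflecting
`i ↦ k + 1 - i` makes this, up to sign, the `(k + 1)`-st forward difference at `0` of
`j ↦ C(j + m - k - 2, k)`, a polynomial of degree `k` in `j`, so it vanishes.
-/

open Finset

theorem alternating_sum_choose_mul_choose_add_eq_zero {k n : ℕ} (hkn : k < n) (a : ℕ) :
    ∑ j ∈ range (n + 1), (-1 : ℤ) ^ (n - j) * n.choose j * (j + a).choose k = 0 := by
  obtain ⟨d, rfl⟩ := Nat.exists_eq_add_of_lt hkn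
  have hchoose : (fwdDiff 1)^[k] (fun x ↦ x.choose k : ℕ → ℤ) = fun _ ↦ 1 := by
    simpa using fwdDiff_iter_choose 0 k
  have hdiff : (fwdDiff 1)^[k + d + 1] (fun x ↦ x.choose k : ℕ → ℤ) = 0 := by
    rw [show k + d + 1 = d + 1 + k by ring, Function.iterate_add_apply, hchoose,
      Function.iterate_succ_apply, fwdDiff_const]
    exact Function.iterate_fixed (fwdDiff_const 1 0) d
  have hshift := fwdDiff_iter_comp_add 1 (fun x ↦ x.choose k : ℕ → ℤ) a (k + d + 1) 0
  rw [hdiff, fwdDiff_iter_eq_sum_shift] at hshift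
  simpa using hshift

theorem alternating_sum_choose_mul_choose_sub_eq_zero {k n M : ℕ} (hkn : k < n) (hnM : n ≤ M) :
    ∑ i ∈ range (n + 1), (-1 : ℤ) ^ i * n.choose i * (M - i).choose k = 0 := by
  rw [← sum_range_reflect, ← alternating_sum_choose_mul_choose_add_eq_zero hkn (M - n)]
  refine sum_congr rfl fun j hj ↦ ?_
  have hjn : j ≤ n := Nat.lt_succ_iff.mp (mem_range.mp hj)
  rw [add_tsub_cancel_right, Nat.choose_symm hjn, show M - (n - j) = j + (M - n) by omega]

theorem Nat.cast_choose_succ_div_succ (K : Type*) [Field K] [CharZero K] (p k : ℕ) :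
    ((p + 1).choose (k + 1) : K) / (p + 1) = p.choose k / (k + 1) := by
  rw [div_eq_div_iff (Nat.cast_add_one_ne_zero p) (Nat.cast_add_one_ne_zero k)]
  exact_mod_cast (p.add_one_mul_choose_eq k).symm.trans (mul_comm _ _)

theorem Nat.cast_choose_succ_div_sub (K : Type*) [Field K] [CharZero K] {i m : ℕ} (him : i < m)
    (k : ℕ) : ((m - i).choose (k + 1) : K) / ((m : K) - i) = (m - 1 - i).choose k / (k + 1) := by
  have hsucc : m - i = m - 1 - i + 1 := by omega
  rw [← Nat.cast_sub him.le, hsucc, Nat.cast_succ, Nat.cast_choose_succ_div_succ]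

/-- For non-negative integers `n < m`,
`∑_{i=0}^n ((-1)^i / (m-i)) C(n,i) C(m-i,n)` equals `1/m` if `n = 0` and `0` if `n ≥ 1`. -/
theorem alternating_binomial_fraction_sum
    (n m : ℕ) (h : n < m) :
    ∑ i ∈ Finset.range (n + 1),
        ((-1 : ℚ) ^ i / ((m : ℚ) - (i : ℚ))) * (n.choose i : ℚ) * ((m - i).choose n : ℚ) =
      if n = 0 then 1 / (m : ℚ) else 0 := by
  cases n with
  | zero => simp
  | succ k =>
    have hterm : ∀ i ∈ range (k + 2),
        (-1 : ℚ) ^ i / ((m : ℚ) - i) * (k + 1).choose i * (m - i).choose (k + 1) =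
          1 / (k + 1) * ((-1 : ℤ) ^ i * (k + 1).choose i * (m - 1 - i).choose k : ℤ) := by
      intro i hi
      have him : i < m := by have := mem_range.mp hi; omega
      rw [mul_right_comm, div_mul_eq_mul_div, mul_div_assoc, Nat.cast_choose_succ_div_sub ℚ him]
      push_cast
      ring
    rw [sum_congr rfl hterm, ← mul_sum, ← Int.cast_sum,
      alternating_sum_choose_mul_choose_sub_eq_zero (Nat.lt_succ_self k) (by omega)]
    simp
end

section
/- Let L be a finite-dimensional Leibniz algebra over ℂ and A an automorphism of L. Write A = A₀ + N for the Jordan–Chevalley decomposition of the linear operator A, where A₀ is diagonalizable, N is nilpotent, and A₀N = NA₀. Then A₀ is itself an automorphism of L. -/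
lemma IsNilpotent.isUnit_of_isUnit_add {R : Type*} [Ring R] {a n : R} (hn : IsNilpotent n)
    (han : Commute a n) (h : IsUnit (a + n)) : IsUnit a := by
  simpa using hn.neg.isUnit_add_left_of_commute h (han.add_left (Commute.refl n)).symm.neg_left

namespace Module.End

variable {R M : Type*} [CommRing R] [AddCommGroup M] [Module R M]

lemma add_pow_apply_of_commute_of_apply_eq_zero {f g : End R M} (hfg : Commute f g) {x : M}
    (hx : f x = 0) (n : ℕ) : ((f + g) ^ n) x = (g ^ n) x := by
  induction n generalizing x with
  | zero => rfl
  | succ n ih =>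
    have hgx : f (g x) = 0 := by rw [← mul_apply, hfg.eq, mul_apply, hx, map_zero]
    rw [pow_succ, mul_apply, LinearMap.add_apply, hx, zero_add, ih hgx, ← mul_apply, ← pow_succ]

lemma eigenspace_le_maxGenEigenspace_add {f g : End R M} (hfg : Commute f g)
    (hg : IsNilpotent g) (μ : R) : f.eigenspace μ ≤ (f + g).maxGenEigenspace μ := by
  intro x hx
  obtain ⟨k, hk⟩ := hg
  have hx' : (f - μ • 1) x = 0 := by simp [mem_eigenspace_iff.mp hx]
  have hcomm : Commute (f - μ • 1) g := hfg.sub_left ((Commute.one_left g).smul_left μ)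
  refine (mem_maxGenEigenspace _ _ _).mpr ⟨k, ?_⟩
  rw [add_sub_right_comm, add_pow_apply_of_commute_of_apply_eq_zero hcomm hx', hk,
    LinearMap.zero_apply]

lemma eigenspace_eq_maxGenEigenspace_add [IsDomain R] [Module.IsTorsionFree R M] {f g : End R M}
    (hf : ⨆ μ, f.eigenspace μ = ⊤) (hfg : Commute f g) (hg : IsNilpotent g) :
    f.eigenspace = (f + g).maxGenEigenspace :=
  ((f + g).independent_maxGenEigenspace.le_iff_eq_of_iSup_eq_top hf).mp
    (eigenspace_le_maxGenEigenspace_add hfg hg)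

section Multiplicative

variable {f : End R M} {b : M →ₗ[R] M →ₗ[R] M}

lemma sub_smul_one_apply_mul_apply (hf : ∀ x y, f (b x y) = b (f x) (f y)) (μ ν : R) (x y : M) :
    (f - (μ * ν) • 1) (b x y) = b ((f - μ • 1) x) (f y) + μ • b x ((f - ν • 1) y) := by
  simp only [LinearMap.sub_apply, LinearMap.smul_apply, one_apply, hf, map_sub, map_smul,
    smul_sub, smul_smul]
  abel

lemma pow_sub_smul_one_apply_mul_eq_zero (hf : ∀ x y, f (b x y) = b (f x) (f y)) {μ ν : R}
    {k l : ℕ} {x y : M} (hx : ((f - μ • 1) ^ k) x = 0) (hy : ((f - ν • 1) ^ l) y = 0) :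
    ((f - (μ * ν) • 1) ^ (k + l)) (b x y) = 0 := by
  induction k generalizing l x y with
  | zero => simp_all
  | succ k ihk =>
    induction l generalizing y with
    | zero => simp_all
    | succ l ihl =>
      -- `f - μ • 1` lowers the index of `x` while `f` keeps that of `y`, and vice versa.
      have hfy : ((f - ν • 1) ^ (l + 1)) (f y) = 0 := by
        rw [← mul_apply, ((Commute.refl f).sub_left ((Commute.one_left f).smul_left ν)).pow_left,
          mul_apply, hy, map_zero]
      rw [show k + 1 + (l + 1) = k + (l + 1) + 1 by omega, pow_succ, mul_apply,
        sub_smul_one_apply_mul_apply hf, map_add, map_smul,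
        ihk (by rwa [← mul_apply, ← pow_succ]) hfy, show k + (l + 1) = k + 1 + l by omega,
        ihl (by rwa [← mul_apply, ← pow_succ]), smul_zero, add_zero]

lemma mem_maxGenEigenspace_mul (hf : ∀ x y, f (b x y) = b (f x) (f y)) {μ ν : R} {x y : M}
    (hx : x ∈ f.maxGenEigenspace μ) (hy : y ∈ f.maxGenEigenspace ν) :
    b x y ∈ f.maxGenEigenspace (μ * ν) := by
  obtain ⟨k, hk⟩ := (mem_maxGenEigenspace _ _ _).mp hx
  obtain ⟨l, hl⟩ := (mem_maxGenEigenspace _ _ _).mp hy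
  exact (mem_maxGenEigenspace _ _ _).mpr ⟨k + l, pow_sub_smul_one_apply_mul_eq_zero hf hk hl⟩

end Multiplicative

end Module.End

namespace LinearMap

variable {R M N P ι κ : Type*} [CommSemiring R] [AddCommMonoid M] [AddCommMonoid N]
  [AddCommMonoid P] [Module R M] [Module R N] [Module R P]

lemma ext_of_iSup_eq_top {V : ι → Submodule R M} (hV : ⨆ i, V i = ⊤) {f g : M →ₗ[R] P}
    (h : ∀ i, ∀ x ∈ V i, f x = g x) : f = g :=
  eqLocus_eq_top.mp <| top_unique <| hV ▸ iSup_le fun i x hx ↦ h i x hx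

lemma ext₂_of_iSup_eq_top {V : ι → Submodule R M} {W : κ → Submodule R N} (hV : ⨆ i, V i = ⊤)
    (hW : ⨆ j, W j = ⊤) {f g : M →ₗ[R] N →ₗ[R] P}
    (h : ∀ i j, ∀ x ∈ V i, ∀ y ∈ W j, f x y = g x y) : f = g :=
  ext_of_iSup_eq_top hV fun i x hx ↦ ext_of_iSup_eq_top hW fun j y hy ↦ h i j x hx y hy

end LinearMap

theorem leibniz_jordan_chevalley_diag_part_is_automorphism_general
    {L : Type*} [AddCommGroup L] [Module ℂ L]
    (b : L →ₗ[ℂ] L →ₗ[ℂ] L)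
    (A : Module.End ℂ L)
    (hbij : Function.Bijective A)
    (hA : ∀ x y : L, A (b x y) = b (A x) (A y))
    (A₀ N : Module.End ℂ L)
    (hdiag : IsDiagonalizable A₀)
    (hnil : IsNilpotent N)
    (hcomm : Commute A₀ N)
    (hsum : A = A₀ + N) :
    Function.Bijective A₀ ∧ ∀ x y : L, A₀ (b x y) = b (A₀ x) (A₀ y) := by
  refine ⟨?_, fun x y ↦ ?_⟩
  · rw [← Module.End.isUnit_iff] at hbij ⊢
    exact hnil.isUnit_of_isUnit_add hcomm (hsum ▸ hbij)
  have hspaces : A₀.eigenspace = A.maxGenEigenspace :=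
    hsum ▸ Module.End.eigenspace_eq_maxGenEigenspace_add hdiag hcomm hnil
  suffices b.compr₂ A₀ = b.compl₁₂ A₀ A₀ from LinearMap.congr_fun₂ this x y
  refine LinearMap.ext₂_of_iSup_eq_top hdiag hdiag fun μ ν x hx y hy ↦ ?_
  have hxy : b x y ∈ A₀.eigenspace (μ * ν) := by
    rw [hspaces] at hx hy ⊢
    exact Module.End.mem_maxGenEigenspace_mul hA hx hy
  rw [Module.End.mem_eigenspace_iff] at hx hy hxy
  simp only [LinearMap.compr₂_apply, LinearMap.compl₁₂_apply, hxy, hx, hy, map_smul,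
    LinearMap.smul_apply, smul_smul, mul_comm ν μ]

/-- Let `L` be a finite-dimensional Leibniz algebra over ℂ and `A` an
automorphism of `L`. If `A = A₀ + N` is the Jordan–Chevalley decomposition of `A`
(`A₀` diagonalizable, `N` nilpotent, `A₀N = NA₀`), then `A₀` is itself an automorphism. -/
theorem leibniz_jordan_chevalley_diag_part_is_automorphism
    {L : Type*} [AddCommGroup L] [Module ℂ L] [FiniteDimensional ℂ L]
    (b : L →ₗ[ℂ] L →ₗ[ℂ] L)
    (leib : ∀ x y z : L, b (b x y) z = b (b x z) y + b x (b y z))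
    (A : Module.End ℂ L)
    (hbij : Function.Bijective A)
    (hA : ∀ x y : L, A (b x y) = b (A x) (A y))
    (A₀ N : Module.End ℂ L)
    (hdiag : IsDiagonalizable A₀)
    (hnil : IsNilpotent N)
    (hcomm : Commute A₀ N)
    (hsum : A = A₀ + N) :
    Function.Bijective A₀ ∧ ∀ x y : L, A₀ (b x y) = b (A₀ x) (A₀ y) :=
  leibniz_jordan_chevalley_diag_part_is_automorphism_general b A hbij hA A₀ N hdiag hnil hcomm hsum
end

section
/- Let L be a finite-dimensional Leibniz algebra over ℂ and Q an automorphism of L such that P = Q − I is nilpotent. Then the operator T = log Q = Σ_{k≥1} ((−1)^{k−1}/k) · P^k (a finite sum since P is nilpotent) is a nilpotent derivation of L. -/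
open Polynomial Nat

lemma aux_poly_vanish {L : Type*} [AddCommGroup L] [Module ℂ L] (D : ℕ) (v : ℕ → L)
    (h : ∀ m : ℕ, ∑ d ∈ Finset.range D, ((m : ℂ)) ^ d • v d = 0) :
    ∀ d ∈ Finset.range D, v d = 0 := by
  intro d hd
  set B := Module.Basis.ofVectorSpace ℂ L
  rw [← B.forall_coord_eq_zero_iff]
  intro i
  set p : Polynomial ℂ := ∑ e ∈ Finset.range D, Polynomial.C (B.coord i (v e)) * X ^ e with hp
  have hroot : ∀ m : ℕ, p.eval (m : ℂ) = 0 := by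
    intro m
    have := congrArg (B.coord i) (h m)
    rw [hp, eval_finset_sum]
    rw [map_sum] at this
    simp only [map_smul, smul_eq_mul] at this
    simp only [eval_mul, eval_C, eval_pow, eval_X]
    rw [map_zero] at this
    rw [← this]
    exact Finset.sum_congr rfl fun e _ => mul_comm _ _
  have hp0 : p = 0 := by
    apply p.eq_zero_of_infinite_isRoot
    apply Set.Infinite.mono (s := Set.range (Nat.cast : ℕ → ℂ))
    · rintro _ ⟨m, rfl⟩; exact hroot m
    · exact Set.infinite_range_of_injective Nat.cast_injective
  have := congrArg (fun q => Polynomial.coeff q d) hp0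
  simpa [hp, Polynomial.finset_sum_coeff, Polynomial.coeff_C_mul, Polynomial.coeff_X_pow,
    Finset.sum_ite_eq' (Finset.range D), hd] using this

lemma aux_dp_coeff_one : ∀ k : ℕ, (descPochhammer ℂ (k + 1)).coeff 1 = (-1) ^ k * (k ! : ℂ) := by
  intro k
  induction k with
  | zero => simp [descPochhammer_one]
  | succ k ih =>
    rw [descPochhammer_succ_right]
    have h0 : (descPochhammer ℂ (k + 1)).coeff 0 = 0 := by
      rw [Polynomial.coeff_zero_eq_eval_zero]
      exact descPochhammer_ne_zero_eval_zero (R := ℂ) (Nat.succ_ne_zero k)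
    have : (descPochhammer ℂ (k+1) * (X - ((k+1 : ℕ) : ℂ[X]))).coeff 1
        = (descPochhammer ℂ (k+1)).coeff 0 - ((k+1 : ℕ) : ℂ) * (descPochhammer ℂ (k+1)).coeff 1 := by
      have : ((k+1:ℕ) : ℂ[X]) = Polynomial.C ((k+1:ℕ) : ℂ) := by push_cast; simp
      rw [this, mul_sub, Polynomial.coeff_sub, Polynomial.coeff_mul_X, Polynomial.coeff_mul_C]
      ring
    rw [this, h0, ih]
    rw [Nat.factorial_succ]
    push_cast
    ring

lemma aux_unipotent_pow {A : Type*} [Ring A] [Algebra ℂ A] (p : A) (n : ℕ) (hp : p ^ n = 0)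
    (m : ℕ) : (p + 1) ^ m = ∑ k ∈ Finset.range n, ((m.choose k : ℂ)) • p ^ k := by
  rw [(Commute.one_right p).add_pow]
  have h1 : ∀ k, p ^ k * 1 ^ (m - k) * (m.choose k : A) = (m.choose k : ℂ) • p ^ k := by
    intro k
    rw [one_pow, mul_one]
    rw [show ((m.choose k : A)) = algebraMap ℂ A (m.choose k : ℂ) by simp]
    rw [← Algebra.commutes, ← Algebra.smul_def]
  simp only [h1]
  rcases le_total (m + 1) n with h | h
  · apply Finset.sum_subset (Finset.range_subset_range.mpr h)
    intro k _ hk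
    simp only [Finset.mem_range, not_lt] at hk
    rw [Nat.choose_eq_zero_of_lt (by omega)]
    simp
  · symm
    apply Finset.sum_subset (Finset.range_subset_range.mpr h)
    intro k _ hk
    simp only [Finset.mem_range, not_lt] at hk
    rw [pow_eq_zero_of_le (by omega) hp]
    simp

set_option maxHeartbeats 1000000 in
/-- Let `L` be a finite-dimensional Leibniz algebra over ℂ and `Q` an
automorphism of `L` such that `P = Q - I` is nilpotent, say `P^n = 0`. Then
`T = log Q = ∑_{k=1}^{n} ((-1)^{k-1}/k) P^k` (a finite sum since `P` is nilpotent)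
is a nilpotent derivation of `L`. -/
theorem leibniz_log_of_unipotent_automorphism_is_nilpotent_derivation
    {L : Type*} [AddCommGroup L] [Module ℂ L] [FiniteDimensional ℂ L]
    (b : L →ₗ[ℂ] L →ₗ[ℂ] L)
    (leib : ∀ x y z : L, b (b x y) z = b (b x z) y + b x (b y z))
    (Q : Module.End ℂ L)
    (hbij : Function.Bijective Q)
    (hQ : ∀ x y : L, Q (b x y) = b (Q x) (Q y))
    (n : ℕ) (hn : (Q - 1) ^ n = 0)
    (T : Module.End ℂ L)
    (hT : T = ∑ k ∈ Finset.range n, ((-1 : ℂ) ^ k / ((k : ℂ) + 1)) • (Q - 1) ^ (k + 1)) :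
    IsNilpotent T ∧ ∀ x y : L, T (b x y) = b (T x) y + b x (T y) := by
  rcases Nat.eq_zero_or_pos n with rfl | hn1
  · -- degenerate case : the algebra is trivial
    rw [pow_zero] at hn
    have hL : ∀ z : L, z = 0 := by
      intro z
      have : (1 : Module.End ℂ L) z = (0 : Module.End ℂ L) z := by rw [hn]
      simpa using this
    refine ⟨⟨1, ?_⟩, fun x y => ?_⟩
    · ext z; rw [hL (((T : Module.End ℂ L) ^ 1) z)]; simp
    · rw [hL (T (b x y)), hL (b (T x) y + b x (T y))]
  set P : Module.End ℂ L := Q - 1 with hP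
  have hQeq : Q = P + 1 := by rw [hP]; abel
  -- the polynomials whose values at natural m are binomial coefficients choose m k
  set g : ℕ → Polynomial ℂ := fun k => Polynomial.C ((k ! : ℂ)⁻¹) * descPochhammer ℂ k with hg
  have hgeval : ∀ k m : ℕ, (g k).eval (m : ℂ) = (m.choose k : ℂ) := by
    intro k m
    rw [hg]
    simp only [eval_mul, eval_C, descPochhammer_eval_eq_descFactorial]
    rw [Nat.descFactorial_eq_factorial_mul_choose]
    push_cast
    rw [← mul_assoc, inv_mul_cancel₀ (by exact_mod_cast Nat.factorial_ne_zero k), one_mul]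
  have hgdeg : ∀ k, (g k).natDegree ≤ k := by
    intro k
    rw [hg]
    refine le_trans (natDegree_mul_le) ?_
    simp
  have hc0 : ∀ k, (g k).coeff 0 = if k = 0 then 1 else 0 := by
    intro k
    rcases Nat.eq_zero_or_pos k with rfl | hk
    · simp [hg, descPochhammer_zero]
    · rw [hg]
      simp only [coeff_C_mul]
      rw [Polynomial.coeff_zero_eq_eval_zero, descPochhammer_ne_zero_eval_zero (R := ℂ) (by omega)]
      simp [Nat.pos_iff_ne_zero.mp hk]
  set c : ℕ → ℂ := fun k => (g k).coeff 1 with hc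
  have hc00 : c 0 = 0 := by simp [hc, hg, descPochhammer_zero, Polynomial.coeff_one]
  have hc1 : ∀ k : ℕ, c (k + 1) = (-1 : ℂ) ^ k / ((k : ℂ) + 1) := by
    intro k
    rw [hc, hg]
    simp only [coeff_C_mul, aux_dp_coeff_one k]
    rw [Nat.factorial_succ]
    push_cast
    have hk0 : ((k : ℂ) + 1) ≠ 0 := Nat.cast_add_one_ne_zero k
    have hkf : ((k ! : ℂ)) ≠ 0 := by exact_mod_cast Nat.factorial_ne_zero k
    field_simp
  -- expansion of Q ^ m
  have hQpow : ∀ m : ℕ, Q ^ m = ∑ k ∈ Finset.range n, ((g k).eval (m : ℂ)) • P ^ k := by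
    intro m
    rw [hQeq, aux_unipotent_pow P n hn m]
    exact Finset.sum_congr rfl fun k _ => by rw [hgeval]
  have hbQ : ∀ (m : ℕ) (x y : L), (Q ^ m) (b x y) = b ((Q ^ m) x) ((Q ^ m) y) := by
    intro m x y
    induction m with
    | zero => simp
    | succ m ih =>
      rw [_root_.pow_succ']
      simp only [Module.End.mul_apply]
      rw [ih, hQ]
  -- T as a sum with coefficients c
  have hTsum : T = ∑ k ∈ Finset.range n, c k • P ^ k := by
    have h1 : T = ∑ k ∈ Finset.range n, c (k + 1) • P ^ (k + 1) := by
      rw [hT]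
      exact Finset.sum_congr rfl fun k _ => by rw [hc1]
    rw [h1]
    calc ∑ k ∈ Finset.range n, c (k + 1) • P ^ (k + 1)
        = (∑ k ∈ Finset.range n, c (k + 1) • P ^ (k + 1)) + c 0 • P ^ 0 := by
          rw [hc00, zero_smul, add_zero]
      _ = ∑ k ∈ Finset.range (n + 1), c k • P ^ k := (Finset.sum_range_succ' (fun k => c k • P ^ k) n).symm
      _ = (∑ k ∈ Finset.range n, c k • P ^ k) + c n • P ^ n := Finset.sum_range_succ _ n
      _ = ∑ k ∈ Finset.range n, c k • P ^ k := by rw [hn, smul_zero, add_zero]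
  constructor
  · -- nilpotency
    set S : Module.End ℂ L := ∑ k ∈ Finset.range n, c (k + 1) • P ^ k with hS
    have hTS : T = P * S := by
      rw [hT, hS, Finset.mul_sum]
      refine Finset.sum_congr rfl fun k _ => ?_
      rw [hc1, mul_smul_comm, _root_.pow_succ']
    have hcomm : Commute P S := by
      rw [hS]
      refine Commute.sum_right _ _ _ fun k _ => ?_
      exact ((Commute.pow_right (Commute.refl P) k)).smul_right _
    exact ⟨n, by rw [hTS, hcomm.mul_pow, hn, zero_mul]⟩
  · -- derivation property
    intro x y
    set w : ℕ → ℕ → L := fun i j => b ((P ^ i) x) ((P ^ j) y) with hw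
    set v : ℕ → L := fun d =>
      (∑ i ∈ Finset.range n, ∑ j ∈ Finset.range n, ((g i * g j).coeff d) • w i j)
        - ∑ k ∈ Finset.range n, ((g k).coeff d) • ((P ^ k) (b x y)) with hv
    have hkey : ∀ m : ℕ, ∑ d ∈ Finset.range (2 * n), ((m : ℂ)) ^ d • v d = 0 := by
      intro m
      have expand : ∀ (q : Polynomial ℂ), q.natDegree < 2 * n →
          ∑ d ∈ Finset.range (2 * n), ((m : ℂ)) ^ d * q.coeff d = q.eval (m : ℂ) := by
        intro q hq
        rw [Polynomial.eval_eq_sum_range' hq]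
        exact Finset.sum_congr rfl fun d _ => mul_comm _ _
      have hRHS : b ((Q ^ m) x) ((Q ^ m) y)
          = ∑ i ∈ Finset.range n, ∑ j ∈ Finset.range n,
              ((g i).eval (m : ℂ) * (g j).eval (m : ℂ)) • w i j := by
        rw [hQpow]
        simp only [map_sum, map_smul, LinearMap.sum_apply, LinearMap.smul_apply,
          Finset.smul_sum, smul_smul, hw]
        rw [Finset.sum_comm]
        exact Finset.sum_congr rfl fun i _ => Finset.sum_congr rfl fun j _ => by rw [mul_comm]
      have hA : ∑ d ∈ Finset.range (2 * n), ((m : ℂ)) ^ d •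
          (∑ i ∈ Finset.range n, ∑ j ∈ Finset.range n, ((g i * g j).coeff d) • w i j)
          = b ((Q ^ m) x) ((Q ^ m) y) := by
        rw [hRHS]
        simp only [Finset.smul_sum]
        rw [Finset.sum_comm]
        refine Finset.sum_congr rfl fun i hi => ?_
        rw [Finset.sum_comm]
        refine Finset.sum_congr rfl fun j hj => ?_
        simp only [smul_smul]
        rw [← Finset.sum_smul, expand (g i * g j) (lt_of_le_of_lt (natDegree_mul_le.trans
          (Nat.add_le_add (hgdeg i) (hgdeg j))) (by
            simp only [Finset.mem_range] at hi hj; omega)), eval_mul]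
      have hB : ∑ d ∈ Finset.range (2 * n), ((m : ℂ)) ^ d •
          (∑ k ∈ Finset.range n, ((g k).coeff d) • ((P ^ k) (b x y)))
          = (Q ^ m) (b x y) := by
        have : (Q ^ m) (b x y)
            = ∑ k ∈ Finset.range n, ((g k).eval (m : ℂ)) • ((P ^ k) (b x y)) := by
          rw [hQpow]
          simp only [LinearMap.sum_apply, LinearMap.smul_apply]
        rw [this]
        simp only [Finset.smul_sum]
        rw [Finset.sum_comm]
        refine Finset.sum_congr rfl fun k hk => ?_
        simp only [smul_smul]
        rw [← Finset.sum_smul, expand (g k) (lt_of_le_of_lt (hgdeg k) (by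
          simp only [Finset.mem_range] at hk; omega))]
      calc ∑ d ∈ Finset.range (2 * n), ((m : ℂ)) ^ d • v d
          = (∑ d ∈ Finset.range (2 * n), ((m : ℂ)) ^ d •
              (∑ i ∈ Finset.range n, ∑ j ∈ Finset.range n, ((g i * g j).coeff d) • w i j))
            - ∑ d ∈ Finset.range (2 * n), ((m : ℂ)) ^ d •
              (∑ k ∈ Finset.range n, ((g k).coeff d) • ((P ^ k) (b x y))) := by
            rw [← Finset.sum_sub_distrib]
            exact Finset.sum_congr rfl fun d _ => by rw [hv, smul_sub]
        _ = b ((Q ^ m) x) ((Q ^ m) y) - (Q ^ m) (b x y) := by rw [hA, hB]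
        _ = 0 := by rw [← hbQ m x y, sub_self]
    have hv1 : v 1 = 0 :=
      aux_poly_vanish (2 * n) v hkey 1 (Finset.mem_range.mpr (by omega))
    -- compute v 1
    have hmul1 : ∀ i j : ℕ, (g i * g j).coeff 1
        = (if i = 0 then c j else 0) + (if j = 0 then c i else 0) := by
      intro i j
      rw [Polynomial.coeff_mul]
      rw [show (1 : ℕ) = 0 + 1 by rfl, Finset.Nat.antidiagonal_succ]
      simp only [Finset.sum_cons, Finset.Nat.antidiagonal_zero, Finset.map_singleton,
        Finset.sum_singleton, Function.Embedding.coe_prodMap, Function.Embedding.coeFn_mk,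
        Function.Embedding.refl_apply, Prod.map_apply]
      rw [hc0 i, hc0 j, hc]
      simp only []
      split_ifs <;> ring
    -- unpack v 1 = 0
    have hveq : (∑ j ∈ Finset.range n, c j • w 0 j) + (∑ i ∈ Finset.range n, c i • w i 0)
        = ∑ k ∈ Finset.range n, c k • ((P ^ k) (b x y)) := by
      have h2 : ∑ i ∈ Finset.range n, ∑ j ∈ Finset.range n, ((g i * g j).coeff 1) • w i j
          = (∑ j ∈ Finset.range n, c j • w 0 j) + (∑ i ∈ Finset.range n, c i • w i 0) := by
        have h3 : ∀ i ∈ Finset.range n, ∑ j ∈ Finset.range n, ((g i * g j).coeff 1) • w i j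
            = (if i = 0 then ∑ j ∈ Finset.range n, c j • w 0 j else 0) + c i • w i 0 := by
          intro i hi
          have h4 : ∀ j ∈ Finset.range n, ((g i * g j).coeff 1) • w i j
              = (if i = 0 then c j • w i j else 0) + (if j = 0 then c i • w i j else 0) := by
            intro j hj
            rw [hmul1, add_smul]
            congr 1 <;> (split_ifs <;> simp)
          rw [Finset.sum_congr rfl h4, Finset.sum_add_distrib]
          congr 1
          · split_ifs with h
            · subst h
              simp
            · simp [h]
          · rw [Finset.sum_ite_eq' (Finset.range n) 0 (fun j => c i • w i j)]
            simp [Finset.mem_range, hn1]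
        rw [Finset.sum_congr rfl h3, Finset.sum_add_distrib]
        congr 1
        rw [Finset.sum_ite_eq' (Finset.range n) 0
          (fun _ => ∑ j ∈ Finset.range n, c j • w 0 j)]
        simp [Finset.mem_range, hn1]
      have h5 := sub_eq_zero.mp hv1
      rw [h2] at h5
      exact h5
    -- translate into the derivation identity
    have hTapp : ∀ z : L, T z = ∑ k ∈ Finset.range n, c k • ((P ^ k) z) := by
      intro z
      rw [hTsum]
      simp [LinearMap.sum_apply]
    have hTx : b (T x) y = ∑ i ∈ Finset.range n, c i • w i 0 := by
      rw [hTapp x, map_sum, LinearMap.sum_apply]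
      refine Finset.sum_congr rfl fun i _ => ?_
      rw [map_smul, LinearMap.smul_apply, hw]
      simp
    have hTy : b x (T y) = ∑ j ∈ Finset.range n, c j • w 0 j := by
      rw [hTapp y, map_sum]
      refine Finset.sum_congr rfl fun j _ => ?_
      rw [map_smul, hw]
      simp
    rw [hTapp (b x y), ← hveq, hTx, hTy]
    abel
end

section
/- Let L be a Leibniz algebra over ℂ, J an ideal of L, and D a derivation of L. Then for every k ≥ 1, (J + D(J))^{(k)} ⊆ J + D^{2^{k−1}}(J^{(k)}), where M^{(1)} = M and M^{(n+1)} = [M^{(n)}, M^{(n)}] denotes the derived series. -/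
/-- The span of all brackets `[x,y]` with `x ∈ M`, `y ∈ N`. -/
def bracketSpan {L : Type*} [AddCommGroup L] [Module ℂ L]
    (b : L →ₗ[ℂ] L →ₗ[ℂ] L) (M N : Submodule ℂ L) : Submodule ℂ L :=
  Submodule.span ℂ {z : L | ∃ x ∈ M, ∃ y ∈ N, z = b x y}

/-- A submodule `J` of a Leibniz algebra with bracket `b` is an ideal if
`[J,L] ⊆ J` and `[L,J] ⊆ J`. -/
def IsLeibnizIdeal {L : Type*} [AddCommGroup L] [Module ℂ L]
    (b : L →ₗ[ℂ] L →ₗ[ℂ] L) (J : Submodule ℂ L) : Prop :=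
  (∀ x ∈ J, ∀ y : L, b x y ∈ J) ∧ (∀ x ∈ J, ∀ y : L, b y x ∈ J)

/-- The derived series of a submodule `M`: `leibnizDerivedSeries b M n = M^{(n+1)}`, i.e.
`leibnizDerivedSeries b M 0 = M (= M^{(1)})` and `M^{(n+1)} = [M^{(n)}, M^{(n)}]`. -/
def leibnizDerivedSeries {L : Type*} [AddCommGroup L] [Module ℂ L]
    (b : L →ₗ[ℂ] L →ₗ[ℂ] L) (M : Submodule ℂ L) : ℕ → Submodule ℂ L
  | 0 => M
  | n + 1 => bracketSpan b (leibnizDerivedSeries b M n) (leibnizDerivedSeries b M n)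


/-!
Modulo `J`, every element of `(D J)^{(n+1)}` behaves like `D^{2^n} w / (2^n)!` for some
`w ∈ J^{(n+1)}` whose lower derivatives `D^i w`, `i < 2^n`, already lie in the ideal `J`.
This is stable under brackets: in the Leibniz expansion of `D^{2m} [w, v]` every term except the
middle one `C(2m, m) [D^m w, D^m v]` has a factor in `J`, and `C(2m, m) (m!)² = (2m)!`.
To keep the witnesses `w` attached, one works with the pairs `(w, s)` in `L × L`.
The summand `J` of `J + D(J)` is absorbed because `J` is an ideal.
-/

open Finset TensorProduct
open scoped Nat

section IterateDerivation
variable {R M : Type*} [CommSemiring R] [AddCommMonoid M] [Module R M]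
  {b : M →ₗ[R] M →ₗ[R] M} {D : Module.End R M}

theorem pow_apply_eq_sum_choose_smul (hD : ∀ x y, D (b x y) = b (D x) y + b x (D y))
    (n : ℕ) (x y : M) :
    (D ^ n) (b x y) = ∑ k ∈ range (n + 1), n.choose k • b ((D ^ k) x) ((D ^ (n - k)) y) := by
  -- `D ∘ b = b ∘ (D ⊗ 1 + 1 ⊗ D)` on `M ⊗ M`; the two summands commute, so the binomial
  -- theorem expands the `n`-th power.
  set T := D.rTensor M + D.lTensor M
  have hT : D ∘ₗ lift b = lift b ∘ₗ T := TensorProduct.ext' fun x y => by simp [T, hD]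
  have hTn : (D ^ n) ∘ₗ lift b = lift b ∘ₗ (T ^ n) := by
    induction n with
    | zero => rfl
    | succ n ih =>
      rw [pow_succ', pow_succ', Module.End.mul_eq_comp, Module.End.mul_eq_comp,
        LinearMap.comp_assoc, ih, ← LinearMap.comp_assoc, hT, LinearMap.comp_assoc]
  have hcomm : Commute (D.rTensor M) (D.lTensor M) := by
    rw [commute_iff_eq, Module.End.mul_eq_comp, Module.End.mul_eq_comp,
      LinearMap.rTensor_comp_lTensor, LinearMap.lTensor_comp_rTensor]
  have hxy := congr($hTn (x ⊗ₜ y))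
  rw [hcomm.add_pow] at hxy
  simpa [LinearMap.rTensor_pow, LinearMap.lTensor_pow] using hxy

end IterateDerivation

section LeibnizIdeal
variable {L : Type*} [AddCommGroup L] [Module ℂ L] {b : L →ₗ[ℂ] L →ₗ[ℂ] L}

lemma mem_bracketSpan {M N : Submodule ℂ L} {x y : L} (hx : x ∈ M) (hy : y ∈ N) :
    b x y ∈ bracketSpan b M N :=
  Submodule.subset_span ⟨x, hx, y, hy, rfl⟩

lemma bracketSpan_le {M N P : Submodule ℂ L} (h : ∀ x ∈ M, ∀ y ∈ N, b x y ∈ P) :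
    bracketSpan b M N ≤ P := by
  rw [bracketSpan, Submodule.span_le]
  rintro _ ⟨x, hx, y, hy, rfl⟩
  exact h x hx y hy

variable {J : Submodule ℂ L}

lemma IsLeibnizIdeal.leibnizDerivedSeries_sup_le (hJ : IsLeibnizIdeal b J)
    (N : Submodule ℂ L) (n : ℕ) :
    leibnizDerivedSeries b (J ⊔ N) n ≤ J ⊔ leibnizDerivedSeries b N n := by
  induction n with
  | zero => exact le_rfl
  | succ n ih =>
    refine bracketSpan_le fun x hx y hy => ?_
    obtain ⟨jx, hjx, ux, hux, rfl⟩ := Submodule.mem_sup.mp (ih hx)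
    obtain ⟨jy, hjy, uy, huy, rfl⟩ := Submodule.mem_sup.mp (ih hy)
    have hexpand : b (jx + ux) (jy + uy) = (b jx (jy + uy) + b ux jy) + b ux uy := by
      simp only [map_add, LinearMap.add_apply]; abel
    rw [hexpand]
    exact add_mem (Submodule.mem_sup_left (add_mem (hJ.1 _ hjx _) (hJ.2 _ hjy _)))
      (Submodule.mem_sup_right (mem_bracketSpan hux huy))

variable {D : Module.End ℂ L} {x y : L} {m : ℕ}

lemma IsLeibnizIdeal.bracket_pow_mem (hJ : IsLeibnizIdeal b J)
    (hx : ∀ i < m, (D ^ i) x ∈ J) (hy : ∀ i < m, (D ^ i) y ∈ J) {k l : ℕ}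
    (hkl : k < m ∨ l < m) : b ((D ^ k) x) ((D ^ l) y) ∈ J := by
  rcases hkl with hk | hl
  · exact hJ.1 _ (hx k hk) _
  · exact hJ.2 _ (hy l hl) _

lemma IsLeibnizIdeal.pow_apply_bracket_mem (hJ : IsLeibnizIdeal b J)
    (hD : ∀ x y : L, D (b x y) = b (D x) y + b x (D y))
    (hx : ∀ i < m, (D ^ i) x ∈ J) (hy : ∀ i < m, (D ^ i) y ∈ J) {i : ℕ} (hi : i < 2 * m) :
    (D ^ i) (b x y) ∈ J := by
  rw [pow_apply_eq_sum_choose_smul hD]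
  refine Submodule.sum_mem _ fun k hk => nsmul_mem (hJ.bracket_pow_mem hx hy ?_) _
  rw [mem_range] at hk
  omega

lemma IsLeibnizIdeal.pow_two_mul_apply_bracket_sub_mem (hJ : IsLeibnizIdeal b J)
    (hD : ∀ x y : L, D (b x y) = b (D x) y + b x (D y))
    (hx : ∀ i < m, (D ^ i) x ∈ J) (hy : ∀ i < m, (D ^ i) y ∈ J) :
    (D ^ (2 * m)) (b x y) - (2 * m).choose m • b ((D ^ m) x) ((D ^ m) y) ∈ J := by
  have hm : m ∈ range (2 * m + 1) := mem_range.mpr (by omega)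
  rw [pow_apply_eq_sum_choose_smul hD, ← add_sum_erase _ _ hm,
    show 2 * m - m = m by omega, add_sub_cancel_left]
  refine Submodule.sum_mem _ fun k hk => nsmul_mem (hJ.bracket_pow_mem hx hy ?_) _
  rw [mem_erase, mem_range] at hk
  omega

end LeibnizIdeal

section DividedPowerPairs
variable {L : Type*} [AddCommGroup L] [Module ℂ L]

/-- In a pair `(w, s)`, `s` plays the role of the divided power `D^m w / m!` modulo `J`. -/
def dividedPowerPairs (D : Module.End ℂ L) (J W : Submodule ℂ L) (m : ℕ) :
    Submodule ℂ (L × L) :=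
  W.comap (LinearMap.fst ℂ L L) ⊓ (⨅ i < m, J.comap ((D ^ i) ∘ₗ LinearMap.fst ℂ L L)) ⊓
    J.comap ((m ! : ℂ) • LinearMap.snd ℂ L L - (D ^ m) ∘ₗ LinearMap.fst ℂ L L)

variable {D : Module.End ℂ L} {J W W' : Submodule ℂ L} {m : ℕ}

lemma mem_dividedPowerPairs {p : L × L} :
    p ∈ dividedPowerPairs D J W m ↔
      p.1 ∈ W ∧ (∀ i < m, (D ^ i) p.1 ∈ J) ∧ (m ! : ℂ) • p.2 - (D ^ m) p.1 ∈ J := by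
  simp [dividedPowerPairs, and_assoc]

lemma map_snd_dividedPowerPairs_le :
    (dividedPowerPairs D J W m).map (LinearMap.snd ℂ L L) ≤ J ⊔ W.map (D ^ m) := by
  rintro _ ⟨⟨w, s⟩, hp, rfl⟩
  obtain ⟨hw, -, hs⟩ := mem_dividedPowerPairs.mp hp
  have hfac : (m ! : ℂ) ≠ 0 := by exact_mod_cast m.factorial_ne_zero
  have hsplit : s = (m ! : ℂ)⁻¹ • ((m ! : ℂ) • s - (D ^ m) w) + (m ! : ℂ)⁻¹ • (D ^ m) w := by
    rw [← smul_add, sub_add_cancel, inv_smul_smul₀ hfac]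
  rw [LinearMap.snd_apply, hsplit]
  exact add_mem (Submodule.mem_sup_left (J.smul_mem _ hs))
    (Submodule.mem_sup_right ((W.map (D ^ m)).smul_mem _ (Submodule.mem_map_of_mem hw)))

variable {b : L →ₗ[ℂ] L →ₗ[ℂ] L}

lemma bracket_mem_dividedPowerPairs (hJ : IsLeibnizIdeal b J)
    (hD : ∀ x y : L, D (b x y) = b (D x) y + b x (D y)) {p q : L × L}
    (hp : p ∈ dividedPowerPairs D J W m) (hq : q ∈ dividedPowerPairs D J W' m) :
    (b p.1 q.1, b p.2 q.2) ∈ dividedPowerPairs D J (bracketSpan b W W') (2 * m) := by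
  obtain ⟨w, s⟩ := p
  obtain ⟨v, t⟩ := q
  obtain ⟨hw, hwJ, hs⟩ := mem_dividedPowerPairs.mp hp
  obtain ⟨hv, hvJ, ht⟩ := mem_dividedPowerPairs.mp hq
  refine mem_dividedPowerPairs.mpr
    ⟨mem_bracketSpan hw hv, fun i hi => hJ.pow_apply_bracket_mem hD hwJ hvJ hi, ?_⟩
  have hfac : ((2 * m) ! : ℂ) = (2 * m).choose m * (m ! * m !) := by
    have h := Nat.choose_mul_factorial_mul_factorial (show m ≤ 2 * m by omega)
    rw [show 2 * m - m = m by omega] at h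
    exact_mod_cast (h.symm.trans (mul_assoc _ _ _))
  have hsplit : ((2 * m) ! : ℂ) • b s t - (D ^ (2 * m)) (b w v) =
      ((2 * m).choose m : ℂ) • (b ((m ! : ℂ) • s - (D ^ m) w) ((m ! : ℂ) • t) +
        b ((D ^ m) w) ((m ! : ℂ) • t - (D ^ m) v)) -
      ((D ^ (2 * m)) (b w v) - ((2 * m).choose m : ℂ) • b ((D ^ m) w) ((D ^ m) v)) := by
    simp only [hfac, map_sub, map_smul, LinearMap.sub_apply, LinearMap.smul_apply]
    module
  rw [hsplit]
  refine sub_mem (J.smul_mem _ (add_mem (hJ.1 _ hs _) (hJ.2 _ ht _))) ?_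
  simpa only [Nat.cast_smul_eq_nsmul] using hJ.pow_two_mul_apply_bracket_sub_mem hD hwJ hvJ

lemma leibnizDerivedSeries_map_le_map_snd_dividedPowerPairs (hJ : IsLeibnizIdeal b J)
    (hD : ∀ x y : L, D (b x y) = b (D x) y + b x (D y)) (n : ℕ) :
    leibnizDerivedSeries b (J.map D) n ≤
      (dividedPowerPairs D J (leibnizDerivedSeries b J n) (2 ^ n)).map (LinearMap.snd ℂ L L) := by
  induction n with
  | zero =>
    rintro _ ⟨u, hu, rfl⟩
    refine ⟨(u, D u), mem_dividedPowerPairs.mpr ⟨hu, fun i hi => ?_, ?_⟩, rfl⟩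
    · rwa [Nat.lt_one_iff.mp hi]
    · simp
  | succ n ih =>
    refine bracketSpan_le fun s hs t ht => ?_
    obtain ⟨p, hp, rfl⟩ := ih hs
    obtain ⟨q, hq, rfl⟩ := ih ht
    rw [pow_succ']
    exact ⟨_, bracket_mem_dividedPowerPairs hJ hD hp hq, rfl⟩

end DividedPowerPairs

theorem leibniz_derived_series_of_ideal_plus_derivation_image_general
    {L : Type*} [AddCommGroup L] [Module ℂ L]
    (b : L →ₗ[ℂ] L →ₗ[ℂ] L)
    (J : Submodule ℂ L) (hJ : IsLeibnizIdeal b J)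
    (D : Module.End ℂ L)
    (hD : ∀ x y : L, D (b x y) = b (D x) y + b x (D y)) :
    ∀ k : ℕ, 1 ≤ k →
      leibnizDerivedSeries b (J ⊔ J.map D) (k - 1) ≤
        J ⊔ (leibnizDerivedSeries b J (k - 1)).map (D ^ (2 ^ (k - 1))) := by
  intro k hk
  obtain ⟨n, rfl⟩ := Nat.exists_eq_add_of_le' hk
  rw [Nat.add_sub_cancel]
  calc leibnizDerivedSeries b (J ⊔ J.map D) n
      ≤ J ⊔ leibnizDerivedSeries b (J.map D) n := hJ.leibnizDerivedSeries_sup_le _ n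
    _ ≤ J ⊔ (J ⊔ (leibnizDerivedSeries b J n).map (D ^ 2 ^ n)) :=
      sup_le_sup_left ((leibnizDerivedSeries_map_le_map_snd_dividedPowerPairs hJ hD n).trans
        map_snd_dividedPowerPairs_le) J
    _ = J ⊔ (leibnizDerivedSeries b J n).map (D ^ 2 ^ n) := by rw [← sup_assoc, sup_idem]

/-- Let `L` be a Leibniz algebra over ℂ, `J` an ideal and `D` a derivation.
Then for every `k ≥ 1`, `(J + D(J))^{(k)} ⊆ J + D^{2^{k-1}}(J^{(k)})`.
(Here `M^{(k)}` is `leibnizDerivedSeries b M (k-1)`.) -/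
theorem leibniz_derived_series_of_ideal_plus_derivation_image
    {L : Type*} [AddCommGroup L] [Module ℂ L]
    (b : L →ₗ[ℂ] L →ₗ[ℂ] L)
    (leib : ∀ x y z : L, b (b x y) z = b (b x z) y + b x (b y z))
    (J : Submodule ℂ L) (hJ : IsLeibnizIdeal b J)
    (D : Module.End ℂ L)
    (hD : ∀ x y : L, D (b x y) = b (D x) y + b x (D y)) :
    ∀ k : ℕ, 1 ≤ k →
      leibnizDerivedSeries b (J ⊔ J.map D) (k - 1) ≤
        J ⊔ (leibnizDerivedSeries b J (k - 1)).map (D ^ (2 ^ (k - 1))) :=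
  leibniz_derived_series_of_ideal_plus_derivation_image_general b J hJ D hD
end

section
/- Let L be a Leibniz algebra over ℂ, J a solvable ideal of L with J^{(m)} = 0, and D a derivation of L. Then J + D(J) is a solvable ideal of L; in fact (J + D(J))^{(2m−1)} = 0. -/
section Aux

variable {L : Type*} [AddCommGroup L] [Module ℂ L]

/-- Iterated Leibniz rule (binomial formula) for a derivation of a bilinear map. -/
private lemma iter_leibniz (b : L →ₗ[ℂ] L →ₗ[ℂ] L) (D : Module.End ℂ L)
    (hD : ∀ x y : L, D (b x y) = b (D x) y + b x (D y)) (k : ℕ) (x y : L) :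
    (D ^ k) (b x y)
      = ∑ c ∈ Finset.range (k + 1), k.choose c • b ((D ^ c) x) ((D ^ (k - c)) y) := by
  -- operators on the space of bilinear maps
  let P1 : Module.End ℂ (L →ₗ[ℂ] L) :=
    { toFun := fun ψ => ψ ∘ₗ (D : L →ₗ[ℂ] L)
      map_add' := fun ψ χ => by ext z; simp
      map_smul' := fun c ψ => by ext z; simp }
  let P2 : Module.End ℂ (L →ₗ[ℂ] L) :=
    { toFun := fun ψ => (D : L →ₗ[ℂ] L) ∘ₗ ψ
      map_add' := fun ψ χ => by ext z; simp
      map_smul' := fun c ψ => by ext z; simp }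
  let A1 : Module.End ℂ (L →ₗ[ℂ] L →ₗ[ℂ] L) :=
    { toFun := fun φ => φ ∘ₗ (D : L →ₗ[ℂ] L)
      map_add' := fun φ ψ => by ext z w; simp
      map_smul' := fun c φ => by ext z w; simp }
  let A2 : Module.End ℂ (L →ₗ[ℂ] L →ₗ[ℂ] L) :=
    { toFun := fun φ => P1 ∘ₗ φ
      map_add' := fun φ ψ => by ext z w; simp [P1]
      map_smul' := fun c φ => by ext z w; simp [P1] }
  let A3 : Module.End ℂ (L →ₗ[ℂ] L →ₗ[ℂ] L) :=
    { toFun := fun φ => P2 ∘ₗ φ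
      map_add' := fun φ ψ => by ext z w; simp [P2]
      map_smul' := fun c φ => by ext z w; simp [P2] }
  have h12 : Commute A1 A2 := by
    show A1 * A2 = A2 * A1
    refine LinearMap.ext fun φ => LinearMap.ext fun u => LinearMap.ext fun v => ?_
    rfl
  have h31 : Commute A3 A1 := by
    show A3 * A1 = A1 * A3
    refine LinearMap.ext fun φ => LinearMap.ext fun u => LinearMap.ext fun v => ?_
    rfl
  have h32 : Commute A3 A2 := by
    show A3 * A2 = A2 * A3
    refine LinearMap.ext fun φ => LinearMap.ext fun u => LinearMap.ext fun v => ?_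
    rfl
  have hb : A3 b = (A1 + A2) b := by
    refine LinearMap.ext fun u => LinearMap.ext fun v => ?_
    simpa [A1, A2, A3, P1, P2] using hD u v
  have a1pow : ∀ (j : ℕ) (φ : L →ₗ[ℂ] L →ₗ[ℂ] L) (u v : L),
      ((A1 ^ j) φ) u v = φ ((D ^ j) u) v := by
    intro j
    induction j with
    | zero => intro φ u v; rw [pow_zero, pow_zero]; rfl
    | succ j ih =>
      intro φ u v
      rw [pow_succ A1 j, pow_succ' D j, Module.End.mul_apply, Module.End.mul_apply]
      exact ih (A1 φ) u v
  have a2pow : ∀ (j : ℕ) (φ : L →ₗ[ℂ] L →ₗ[ℂ] L) (u v : L),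
      ((A2 ^ j) φ) u v = φ u ((D ^ j) v) := by
    intro j
    induction j with
    | zero => intro φ u v; rw [pow_zero, pow_zero]; rfl
    | succ j ih =>
      intro φ u v
      rw [pow_succ A2 j, pow_succ' D j, Module.End.mul_apply, Module.End.mul_apply]
      exact ih (A2 φ) u v
  have a3pow : ∀ (j : ℕ) (φ : L →ₗ[ℂ] L →ₗ[ℂ] L) (u v : L),
      ((A3 ^ j) φ) u v = (D ^ j) (φ u v) := by
    intro j
    induction j with
    | zero => intro φ u v; rw [pow_zero, pow_zero]; rfl
    | succ j ih =>
      intro φ u v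
      rw [pow_succ A3 j, pow_succ D j, Module.End.mul_apply, Module.End.mul_apply]
      exact ih (A3 φ) u v
  have hpow : ∀ j : ℕ, (A3 ^ j) b = ((A1 + A2) ^ j) b := by
    intro j
    induction j with
    | zero => rfl
    | succ j ih =>
      have hS : Commute A3 ((A1 + A2) ^ j) := (h31.add_right h32).pow_right j
      calc (A3 ^ (j + 1)) b = A3 ((A3 ^ j) b) := by
            rw [pow_succ' A3 j, Module.End.mul_apply]
        _ = A3 (((A1 + A2) ^ j) b) := by rw [ih]
        _ = ((A1 + A2) ^ j) (A3 b) := by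
            have h := LinearMap.congr_fun hS.eq b
            simpa [Module.End.mul_apply] using h
        _ = ((A1 + A2) ^ j) ((A1 + A2) b) := by rw [hb]
        _ = ((A1 + A2) ^ (j + 1)) b := by rw [pow_succ (A1 + A2) j, Module.End.mul_apply]
  have h1 : (D ^ k) (b x y) = ((A3 ^ k) b) x y := (a3pow k b x y).symm
  rw [h1, hpow k, h12.add_pow k]
  simp only [LinearMap.sum_apply]
  refine Finset.sum_congr rfl fun c _ => ?_
  rw [Module.End.mul_apply, Module.End.mul_apply, Module.End.natCast_apply,
    map_nsmul, map_nsmul, LinearMap.smul_apply, LinearMap.smul_apply]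
  rw [a1pow, a2pow]

/-- `D^k (J^{(s)}-th derived term) ⊆ J` as long as `k < 2^s`. -/
private lemma pow_map_derived_le (b : L →ₗ[ℂ] L →ₗ[ℂ] L) (J : Submodule ℂ L)
    (hJ : IsLeibnizIdeal b J) (D : Module.End ℂ L)
    (hD : ∀ x y : L, D (b x y) = b (D x) y + b x (D y)) :
    ∀ s k, k < 2 ^ s → (leibnizDerivedSeries b J s).map (D ^ k) ≤ J := by
  intro s
  induction s with
  | zero =>
    intro k hk
    have hk0 : k = 0 := by simpa using Nat.lt_one_iff.mp (by simpa using hk)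
    subst hk0
    rw [pow_zero, Module.End.one_eq_id, Submodule.map_id]
    exact le_rfl
  | succ s ih =>
    intro k hk
    have hseries : leibnizDerivedSeries b J (s + 1)
        = bracketSpan b (leibnizDerivedSeries b J s) (leibnizDerivedSeries b J s) := rfl
    rw [hseries, bracketSpan, Submodule.map_span, Submodule.span_le]
    rintro _ ⟨z, ⟨w, hw, w', hw', rfl⟩, rfl⟩
    show (D ^ k) (b w w') ∈ J
    rw [iter_leibniz b D hD]
    refine Submodule.sum_mem _ fun c _ => ?_
    refine nsmul_mem ?_ _
    by_cases hcs : c < 2 ^ s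
    · exact hJ.1 _ (ih c hcs (Submodule.mem_map_of_mem hw)) _
    · have h2 : k - c < 2 ^ s := by
        have hps : (2 : ℕ) ^ (s + 1) = 2 ^ s + 2 ^ s := by rw [pow_succ, Nat.mul_two]
        omega
      exact hJ.2 _ (ih _ h2 (Submodule.mem_map_of_mem hw')) _

private lemma bracketSpan_mono (b : L →ₗ[ℂ] L →ₗ[ℂ] L) {M M' N N' : Submodule ℂ L}
    (h1 : M ≤ M') (h2 : N ≤ N') : bracketSpan b M N ≤ bracketSpan b M' N' := by
  refine Submodule.span_mono ?_
  rintro z ⟨x, hx, y, hy, rfl⟩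
  exact ⟨x, h1 hx, y, h2 hy, rfl⟩

private lemma derived_mono (b : L →ₗ[ℂ] L →ₗ[ℂ] L) {M N : Submodule ℂ L} (h : M ≤ N) :
    ∀ r, leibnizDerivedSeries b M r ≤ leibnizDerivedSeries b N r := by
  intro r
  induction r with
  | zero => exact h
  | succ r ih => exact bracketSpan_mono b ih ih

private lemma derived_shift (b : L →ₗ[ℂ] L →ₗ[ℂ] L) (M : Submodule ℂ L) (a : ℕ) :
    ∀ r, leibnizDerivedSeries b M (a + r)
      = leibnizDerivedSeries b (leibnizDerivedSeries b M a) r := by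
  intro r
  induction r with
  | zero => rfl
  | succ r ih =>
    show bracketSpan b (leibnizDerivedSeries b M (a + r)) (leibnizDerivedSeries b M (a + r)) = _
    rw [ih]
    rfl

/-- The main invariant: the `n`-th derived term of `K = J ⊔ D(J)` is contained in
`J ⊔ D^{2^n} (J^{(n)})`. -/
private lemma main_invariant (b : L →ₗ[ℂ] L →ₗ[ℂ] L) (J : Submodule ℂ L)
    (hJ : IsLeibnizIdeal b J) (D : Module.End ℂ L)
    (hD : ∀ x y : L, D (b x y) = b (D x) y + b x (D y)) :
    ∀ n, leibnizDerivedSeries b (J ⊔ J.map D) n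
      ≤ J ⊔ (leibnizDerivedSeries b J n).map (D ^ (2 ^ n)) := by
  intro n
  induction n with
  | zero =>
    show J ⊔ J.map D ≤ J ⊔ J.map (D ^ (2 ^ 0))
    norm_num
  | succ n ih =>
    have hKdef : leibnizDerivedSeries b (J ⊔ J.map D) (n + 1)
        = bracketSpan b (leibnizDerivedSeries b (J ⊔ J.map D) n)
            (leibnizDerivedSeries b (J ⊔ J.map D) n) := rfl
    rw [hKdef, bracketSpan, Submodule.span_le]
    rintro _ ⟨x, hx, y, hy, rfl⟩
    obtain ⟨p, hp, q, hq, rfl⟩ := Submodule.mem_sup.mp (ih hx)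
    obtain ⟨p', hp', q', hq', rfl⟩ := Submodule.mem_sup.mp (ih hy)
    obtain ⟨ξ, hξ, rfl⟩ := hq
    obtain ⟨ξ', hξ', rfl⟩ := hq'
    set N := 2 ^ n with hN
    set T := J ⊔ (leibnizDerivedSeries b J (n + 1)).map (D ^ (2 ^ (n + 1))) with hT
    show b (p + (D ^ N) ξ) (p' + (D ^ N) ξ') ∈ T
    have hexp : b (p + (D ^ N) ξ) (p' + (D ^ N) ξ')
        = b p p' + b p ((D ^ N) ξ')
          + (b ((D ^ N) ξ) p' + b ((D ^ N) ξ) ((D ^ N) ξ')) := by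
      simp only [map_add, LinearMap.add_apply]
      abel
    rw [hexp]
    have hgenmem : b ξ ξ' ∈ leibnizDerivedSeries b J (n + 1) :=
      Submodule.subset_span ⟨ξ, hξ, ξ', hξ', rfl⟩
    -- the key element
    have hkey : b ((D ^ N) ξ) ((D ^ N) ξ') ∈ T := by
      have hbin := iter_leibniz b D hD (N + N) ξ ξ'
      have hmem : N ∈ Finset.range (N + N + 1) :=
        Finset.mem_range.mpr (Nat.lt_succ_of_le (Nat.le_add_right N N))
      rw [← Finset.add_sum_erase _ _ hmem] at hbin
      have hsub : N + N - N = N := Nat.add_sub_cancel N N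
      rw [hsub] at hbin
      have hT1 : (D ^ (N + N)) (b ξ ξ') ∈ T := by
        refine Submodule.mem_sup_right ?_
        have h2N : 2 ^ (n + 1) = N + N := by rw [pow_succ, Nat.mul_two]
        rw [h2N]
        exact Submodule.mem_map_of_mem hgenmem
      have hT2 : ∑ c ∈ (Finset.range (N + N + 1)).erase N,
          (N + N).choose c • b ((D ^ c) ξ) ((D ^ (N + N - c)) ξ') ∈ T := by
        refine Submodule.mem_sup_left (Submodule.sum_mem _ fun c hc => ?_)
        have hcne : c ≠ N := (Finset.mem_erase.mp hc).1
        have hcr : c < N + N + 1 := Finset.mem_range.mp (Finset.mem_erase.mp hc).2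
        refine nsmul_mem ?_ _
        by_cases hcN : c < N
        · exact hJ.1 _ (pow_map_derived_le b J hJ D hD n c hcN
            (Submodule.mem_map_of_mem hξ)) _
        · have hNpos : 0 < N := Nat.two_pow_pos n
          have hNc : N < c := lt_of_le_of_ne (not_lt.mp hcN) (Ne.symm hcne)
          have h1 : N + 1 ≤ c := Nat.succ_le_of_lt hNc
          have hcN' : N + N - c < N := by
            calc N + N - c ≤ N + N - (N + 1) := Nat.sub_le_sub_left h1 _
              _ = N - 1 := Nat.add_sub_add_left N N 1
              _ < N := Nat.sub_lt hNpos Nat.one_pos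
          exact hJ.2 _ (pow_map_derived_le b J hJ D hD n _ hcN'
            (Submodule.mem_map_of_mem hξ')) _
      have heq : (N + N).choose N • b ((D ^ N) ξ) ((D ^ N) ξ')
          = (D ^ (N + N)) (b ξ ξ')
            - ∑ c ∈ (Finset.range (N + N + 1)).erase N,
                (N + N).choose c • b ((D ^ c) ξ) ((D ^ (N + N - c)) ξ') := by
        rw [hbin]; abel
      have hC : ((N + N).choose N : ℂ) ≠ 0 :=
        Nat.cast_ne_zero.mpr (Nat.choose_pos (Nat.le_add_right N N)).ne'
      have hsmul : ((N + N).choose N : ℂ) • b ((D ^ N) ξ) ((D ^ N) ξ') ∈ T := by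
        rw [Nat.cast_smul_eq_nsmul, heq]
        exact sub_mem hT1 hT2
      have := Submodule.smul_mem T (((N + N).choose N : ℂ))⁻¹ hsmul
      rwa [inv_smul_smul₀ hC] at this
    refine add_mem (add_mem ?_ ?_) (add_mem ?_ hkey)
    · exact Submodule.mem_sup_left (hJ.1 p hp p')
    · exact Submodule.mem_sup_left (hJ.1 p hp _)
    · exact Submodule.mem_sup_left (hJ.2 p' hp' _)

end Aux

/-- Let `L` be a Leibniz algebra over ℂ, `J` a solvable ideal with
`J^{(m)} = 0`, and `D` a derivation. Then `J + D(J)` is a solvable ideal of `L`;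
in fact `(J + D(J))^{(2m-1)} = 0`. (Here `M^{(k)}` is `leibnizDerivedSeries b M (k-1)`.) -/
theorem leibniz_ideal_plus_derivation_image_is_solvable_ideal
    {L : Type*} [AddCommGroup L] [Module ℂ L]
    (b : L →ₗ[ℂ] L →ₗ[ℂ] L)
    (leib : ∀ x y z : L, b (b x y) z = b (b x z) y + b x (b y z))
    (J : Submodule ℂ L) (hJ : IsLeibnizIdeal b J)
    (m : ℕ) (hm : 1 ≤ m) (hsolv : leibnizDerivedSeries b J (m - 1) = ⊥)
    (D : Module.End ℂ L)
    (hD : ∀ x y : L, D (b x y) = b (D x) y + b x (D y)) :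
    IsLeibnizIdeal b (J ⊔ J.map D) ∧
      leibnizDerivedSeries b (J ⊔ J.map D) (2 * m - 1 - 1) = ⊥ := by
  constructor
  · constructor
    · intro x hx y
      obtain ⟨p, hp, q, hq, rfl⟩ := Submodule.mem_sup.mp hx
      obtain ⟨r, hr, rfl⟩ := hq
      have hexp : b (p + D r) y = b p y + b (D r) y := by simp [map_add]
      have h2 : b (D r) y = D (b r y) - b r (D y) := by rw [hD r y]; abel
      rw [hexp, h2]
      refine add_mem (Submodule.mem_sup_left (hJ.1 p hp y)) (sub_mem ?_ ?_)
      · exact Submodule.mem_sup_right (Submodule.mem_map_of_mem (hJ.1 r hr y))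
      · exact Submodule.mem_sup_left (hJ.1 r hr (D y))
    · intro x hx y
      obtain ⟨p, hp, q, hq, rfl⟩ := Submodule.mem_sup.mp hx
      obtain ⟨r, hr, rfl⟩ := hq
      have hexp : b y (p + D r) = b y p + b y (D r) := by simp
      have h2 : b y (D r) = D (b y r) - b (D y) r := by rw [hD y r]; abel
      rw [hexp, h2]
      refine add_mem (Submodule.mem_sup_left (hJ.2 p hp y)) (sub_mem ?_ ?_)
      · exact Submodule.mem_sup_right (Submodule.mem_map_of_mem (hJ.2 r hr y))
      · exact Submodule.mem_sup_left (hJ.2 r hr (D y))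
  · have hK : leibnizDerivedSeries b (J ⊔ J.map D) (m - 1) ≤ J := by
      refine le_trans (main_invariant b J hJ D hD (m - 1)) ?_
      rw [hsolv, Submodule.map_bot, sup_bot_eq]
    have h2 : leibnizDerivedSeries b (J ⊔ J.map D) ((m - 1) + (m - 1)) ≤ ⊥ := by
      rw [derived_shift]
      refine le_trans (derived_mono b hK (m - 1)) ?_
      rw [hsolv]
    have hidx : 2 * m - 1 - 1 = (m - 1) + (m - 1) := by omega
    rw [hidx]
    exact le_bot_iff.mp h2
end
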